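/- arXiv:1308.0062 — 4 statements merged into one kernel-verified Lean document; each statement's English description precedes it below -/
import Mathlib

section
/- Let (X, μ) be a measure space, ψ : X → ℝ a bounded measurable function, and t > 0, c > 0. Let A be a bounded invertible linear operator on L²(X, μ) such that Re⟨M_{e^{tψ}} A M_{e^{−tψ}} u, u⟩ ≥ c‖u‖² for every u ∈ L²(X, μ). Let U and U′ be measurable subsets of X such that ψ ≤ 0 μ-a.e. on U and ψ ≥ 1 μ-a.e. on U′. Then for every f ∈ L²(X, μ) vanishing μ-a.e. outside U, one has ‖(A^{-1} f)·1_{U′}‖_{L²} ≤ c^{-1} e^{−t} ‖f‖_{L²}. -/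
open MeasureTheory

/-- A coercivity inequality for the conjugated operator `e^{tψ} A e^{-tψ}` is a weighted
inequality for `A⁻¹`, yielding exponential off-diagonal decay `e^{-t}`. -/
theorem weighted_coercivity_decay {X : Type*} [MeasurableSpace X] (μ : Measure X)
    (ψ : X → ℝ) (hψm : Measurable ψ) (Cψ : ℝ) (hψb : ∀ x, |ψ x| ≤ Cψ)
    (t c : ℝ) (ht : 0 < t) (hc : 0 < c)
    (A : Lp ℂ 2 μ ≃L[ℂ] Lp ℂ 2 μ)
    (hcoerc : ∀ u v w : Lp ℂ 2 μ,
      (v : X → ℂ) =ᵐ[μ] (fun x => Real.exp (-t * ψ x) * (u : X → ℂ) x) →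
      (w : X → ℂ) =ᵐ[μ] (fun x => Real.exp (t * ψ x) * (A v : X → ℂ) x) →
      c * ‖u‖ ^ 2 ≤ (inner ℂ w u : ℂ).re)
    (U U' : Set X) (hU : MeasurableSet U) (hU' : MeasurableSet U')
    (hψU : ∀ᵐ x ∂μ, x ∈ U → ψ x ≤ 0) (hψU' : ∀ᵐ x ∂μ, x ∈ U' → 1 ≤ ψ x) :
    ∀ f : Lp ℂ 2 μ, (∀ᵐ x ∂μ, x ∉ U → (f : X → ℂ) x = 0) →
      eLpNorm (U'.indicator (A.symm f : X → ℂ)) 2 μ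
        ≤ ENNReal.ofReal (c⁻¹ * Real.exp (-t) * ‖f‖) := by
  intro f hf
  set g := A.symm f with hgdef
  have hgmem : MemLp (g : X → ℂ) 2 μ := Lp.memLp g
  have hfmem : MemLp (f : X → ℂ) 2 μ := Lp.memLp f
  have hφm : Measurable fun x => (Real.exp (t * ψ x) : ℂ) :=
    Complex.measurable_ofReal.comp (Real.measurable_exp.comp (measurable_const.mul hψm))
  -- the function e^{tψ} g is in L²
  have humem : MemLp (fun x => (Real.exp (t * ψ x) : ℂ) * (g : X → ℂ) x) 2 μ := by
    apply MemLp.of_le_mul (c := Real.exp (t * Cψ)) hgmem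
      (hφm.aestronglyMeasurable.mul (Lp.aestronglyMeasurable g))
    filter_upwards with x
    simp only [Pi.mul_apply]
    rw [norm_mul, Complex.norm_real, Real.norm_eq_abs, abs_of_pos (Real.exp_pos _)]
    have h := (abs_le.1 (hψb x)).2
    have hle : Real.exp (t * ψ x) ≤ Real.exp (t * Cψ) :=
      Real.exp_le_exp.2 (by nlinarith [ht.le])
    nlinarith [norm_nonneg ((g : X → ℂ) x)]
  have hwmem : MemLp (fun x => (Real.exp (t * ψ x) : ℂ) * (f : X → ℂ) x) 2 μ := by
    apply MemLp.of_le_mul (c := Real.exp (t * Cψ)) hfmem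
      (hφm.aestronglyMeasurable.mul (Lp.aestronglyMeasurable f))
    filter_upwards with x
    simp only [Pi.mul_apply]
    rw [norm_mul, Complex.norm_real, Real.norm_eq_abs, abs_of_pos (Real.exp_pos _)]
    have h := (abs_le.1 (hψb x)).2
    have hle : Real.exp (t * ψ x) ≤ Real.exp (t * Cψ) :=
      Real.exp_le_exp.2 (by nlinarith [ht.le])
    nlinarith [norm_nonneg ((f : X → ℂ) x)]
  set u : Lp ℂ 2 μ := humem.toLp _ with hudef
  set w : Lp ℂ 2 μ := hwmem.toLp _ with hwdef
  have hu : (u : X → ℂ) =ᵐ[μ] fun x => (Real.exp (t * ψ x) : ℂ) * (g : X → ℂ) x :=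
    humem.coeFn_toLp
  have hw : (w : X → ℂ) =ᵐ[μ] fun x => (Real.exp (t * ψ x) : ℂ) * (f : X → ℂ) x :=
    hwmem.coeFn_toLp
  -- coercivity gives c‖u‖² ≤ Re⟨w, u⟩
  have hAg : A g = f := A.apply_symm_apply f
  have hcoe : c * ‖u‖ ^ 2 ≤ (inner ℂ w u : ℂ).re := by
    apply hcoerc u g w
    · filter_upwards [hu] with x hx
      rw [hx, ← mul_assoc, ← Complex.ofReal_mul, ← Real.exp_add, neg_mul, neg_add_cancel,
        Real.exp_zero, Complex.ofReal_one, one_mul]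
    · rw [hAg]
      exact hw
  -- bound ‖w‖ ≤ ‖f‖ : on U, e^{tψ} ≤ 1; off U, f = 0
  have hwf : ‖w‖ ≤ ‖f‖ := by
    rw [Lp.norm_def, Lp.norm_def]
    gcongr
    · exact Lp.eLpNorm_ne_top f
    apply eLpNorm_mono_ae
    filter_upwards [hw, hf, hψU] with x hx hfx hψx
    rw [hx, norm_mul, Complex.norm_real, Real.norm_eq_abs, abs_of_pos (Real.exp_pos _)]
    by_cases hxU : x ∈ U
    · have : t * ψ x ≤ 0 := mul_nonpos_of_nonneg_of_nonpos ht.le (hψx hxU)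
      nlinarith [Real.exp_le_one_iff.2 this, norm_nonneg ((f : X → ℂ) x)]
    · simp [hfx hxU]
  -- hence c‖u‖ ≤ ‖f‖
  have hcu : c * ‖u‖ ≤ ‖f‖ := by
    rcases eq_or_lt_of_le (norm_nonneg u) with h0 | h0
    · rw [← h0, mul_zero]; exact norm_nonneg f
    have h1 : (inner ℂ w u : ℂ).re ≤ ‖w‖ * ‖u‖ := by
      calc (inner ℂ w u : ℂ).re ≤ ‖(inner ℂ w u : ℂ)‖ := Complex.re_le_norm _
        _ ≤ ‖w‖ * ‖u‖ := norm_inner_le_norm w u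
    have h2 : c * ‖u‖ ^ 2 ≤ ‖f‖ * ‖u‖ := by
      calc c * ‖u‖ ^ 2 ≤ (inner ℂ w u : ℂ).re := hcoe
        _ ≤ ‖w‖ * ‖u‖ := h1
        _ ≤ ‖f‖ * ‖u‖ := by gcongr
    have := mul_le_mul_iff_left₀ h0 |>.1 (by nlinarith : (c * ‖u‖) * ‖u‖ ≤ ‖f‖ * ‖u‖)
    exact this
  -- final estimate
  have hptwise : ∀ᵐ x ∂μ, ‖U'.indicator (g : X → ℂ) x‖ ≤
      ‖(Real.exp (-t) : ℂ) * (u : X → ℂ) x‖ := by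
    filter_upwards [hu, hψU'] with x hx hψx
    by_cases hxU' : x ∈ U'
    · rw [Set.indicator_of_mem hxU', norm_mul, hx, norm_mul, Complex.norm_real,
        Complex.norm_real, Real.norm_eq_abs, Real.norm_eq_abs,
        abs_of_pos (Real.exp_pos _), abs_of_pos (Real.exp_pos _)]
      have h1 : (1 : ℝ) ≤ ψ x := hψx hxU'
      have hee : Real.exp (-t) * Real.exp (t * ψ x) = Real.exp (t * ψ x - t) := by
        rw [← Real.exp_add]; ring_nf
      have ht' : (0:ℝ) ≤ t * ψ x - t := by
        have h2 := mul_le_mul_of_nonneg_left h1 ht.le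
        linarith
      calc ‖(g : X → ℂ) x‖ ≤ Real.exp (t * ψ x - t) * ‖(g : X → ℂ) x‖ :=
            le_mul_of_one_le_left (norm_nonneg _) (Real.one_le_exp ht')
        _ = Real.exp (-t) * (Real.exp (t * ψ x) * ‖(g : X → ℂ) x‖) := by
            rw [← mul_assoc, hee]
    · rw [Set.indicator_of_notMem hxU']
      simp [norm_nonneg]
  calc eLpNorm (U'.indicator (g : X → ℂ)) 2 μ
      ≤ eLpNorm (fun x => (Real.exp (-t) : ℂ) * (u : X → ℂ) x) 2 μ :=
        eLpNorm_mono_ae hptwise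
    _ = ‖(Real.exp (-t) : ℂ)‖₊ * eLpNorm (u : X → ℂ) 2 μ := by
        rw [← enorm_eq_nnnorm, ← eLpNorm_const_smul]
        rfl
    _ ≤ ENNReal.ofReal (c⁻¹ * Real.exp (-t) * ‖f‖) := by
        have hnorm : eLpNorm (u : X → ℂ) 2 μ = ENNReal.ofReal ‖u‖ := by
          rw [Lp.norm_def, ENNReal.ofReal_toReal (Lp.eLpNorm_ne_top u)]
        rw [hnorm]
        have : (‖(Real.exp (-t) : ℂ)‖₊ : ENNReal) = ENNReal.ofReal (Real.exp (-t)) := by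
          rw [← enorm_eq_nnnorm, ← ofReal_norm, Complex.norm_real, Real.norm_eq_abs,
            abs_of_pos (Real.exp_pos _)]
        rw [this, ← ENNReal.ofReal_mul (Real.exp_pos _).le]
        apply ENNReal.ofReal_le_ofReal
        have : ‖u‖ ≤ c⁻¹ * ‖f‖ := by
          rw [← mul_le_mul_iff_right₀ hc, ← mul_assoc, mul_inv_cancel₀ hc.ne', one_mul]
          exact hcu
        calc Real.exp (-t) * ‖u‖ ≤ Real.exp (-t) * (c⁻¹ * ‖f‖) := by
              gcongr
          _ = c⁻¹ * Real.exp (-t) * ‖f‖ := by ring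
end

section
/- Let F : ℂ → ℂ be continuously differentiable (as a function on ℝ²) with compact support. Then for every z ∈ ℂ, F(z) = (1/π) ∫_ℂ (∂F/∂w)(w) · (conj(z) − conj(w))^{-1} dm(w). -/
open MeasureTheory Complex

open Set
open scoped Real

/-- The Wirtinger derivative `∂f/∂z = (∂f/∂x - i ∂f/∂y)/2`. -/
noncomputable def wirtingerDz (f : ℂ → ℂ) (z : ℂ) : ℂ :=
  (fderiv ℝ f z 1 - Complex.I * fderiv ℝ f z Complex.I) / 2

theorem setIntegral_prod_symm' {E : Type*} [NormedAddCommGroup E] [NormedSpace ℝ E]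
    (f : ℝ × ℝ → E) {s t : Set ℝ} (hf : IntegrableOn f (s ×ˢ t)) :
    ∫ z in s ×ˢ t, f z = ∫ y in t, ∫ x in s, f (x, y) := by
  rw [Measure.volume_eq_prod] at hf ⊢
  simp only [← Measure.prod_restrict s t, IntegrableOn] at hf ⊢
  exact integral_prod_symm f hf

theorem aux_integrableOn {h : ℝ × ℝ → ℂ} (hc : Continuous h) {R : ℝ} (hR0 : 0 < R)
    (hR : ∀ p : ℝ × ℝ, R < p.1 → h p = 0) :
    IntegrableOn h (Ioi (0:ℝ) ×ˢ Ioo (-π) π) := by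
  have hs : Ioi (0:ℝ) = Ioc 0 R ∪ Ioi R := (Ioc_union_Ioi_eq_Ioi hR0.le).symm
  rw [hs, Set.union_prod]
  apply IntegrableOn.union
  · exact (hc.continuousOn.integrableOn_compact (isCompact_Icc.prod isCompact_Icc)).mono_set
      (Set.prod_mono Ioc_subset_Icc_self Ioo_subset_Icc_self)
  · have heq : EqOn h 0 (Ioi R ×ˢ Ioo (-π) π) := fun p hp => hR p hp.1
    rw [integrableOn_congr_fun heq (measurableSet_Ioi.prod measurableSet_Ioo)]
    exact integrableOn_zero

theorem aux_integrableOn1 {h : ℝ → ℂ} (hc : Continuous h) {R : ℝ} (hR0 : 0 < R)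
    (hR : ∀ r : ℝ, R < r → h r = 0) :
    IntegrableOn h (Ioi (0:ℝ)) := by
  have hs : Ioi (0:ℝ) = Ioc 0 R ∪ Ioi R := (Ioc_union_Ioi_eq_Ioi hR0.le).symm
  rw [hs]
  apply IntegrableOn.union
  · exact (hc.continuousOn.integrableOn_compact isCompact_Icc).mono_set Ioc_subset_Icc_self
  · have heq : EqOn h 0 (Ioi R) := fun r hr => hR r hr
    rw [integrableOn_congr_fun heq measurableSet_Ioi]
    exact integrableOn_zero

theorem key (F : ℂ → ℂ) (hF : ContDiff ℝ 1 F) (hsupp : HasCompactSupport F) :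
    (∫ w : ℂ, wirtingerDz F w * (-((starRingEnd ℂ) w))⁻¹) = (Real.pi : ℂ) * F 0 := by
  set D : ℂ → ℂ →L[ℝ] ℂ := fderiv ℝ F with hD
  have hDc : Continuous D := hF.continuous_fderiv one_ne_zero
  -- radius
  obtain ⟨R, hR⟩ := hsupp.isCompact.isBounded.subset_closedBall 0
  set R' := max R 1 with hR'
  have hR0 : (0:ℝ) < R' := lt_of_lt_of_le one_pos (le_max_right _ _)
  have hFz : ∀ w : ℂ, R' < ‖w‖ → F w = 0 := by
    intro w hw
    apply image_eq_zero_of_notMem_tsupport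
    intro hmem
    have := hR hmem
    simp only [Metric.mem_closedBall, dist_zero_right] at this
    have : ‖w‖ ≤ R' := this.trans (le_max_left _ _)
    linarith
  have hDz : ∀ w : ℂ, R' < ‖w‖ → D w = 0 := by
    intro w hw
    by_contra hne
    have : w ∈ tsupport F := support_fderiv_subset ℝ (by simpa [hD] using hne)
    have := (hR this)
    simp only [Metric.mem_closedBall, dist_zero_right] at this
    have : ‖w‖ ≤ R' := this.trans (le_max_left _ _)
    linarith
  -- polar coordinates
  rw [← Complex.integral_comp_polarCoord_symm, polarCoord_target]
  set h₁ : ℝ × ℝ → ℂ := fun p => D (↑p.1 * Complex.exp (↑p.2 * I)) (Complex.exp (↑p.2 * I)) with hh₁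
  set h₂ : ℝ × ℝ → ℂ := fun p => D (↑p.1 * Complex.exp (↑p.2 * I)) (Complex.exp (↑p.2 * I) * I) with hh₂
  have hcsymm : ∀ p : ℝ × ℝ, Complex.polarCoord.symm p = ↑p.1 * Complex.exp (↑p.2 * I) := by
    intro p
    rw [Complex.polarCoord_symm_apply, Complex.exp_mul_I, Complex.ofReal_cos, Complex.ofReal_sin]
  have habs : ∀ p : ℝ × ℝ, ‖(↑p.1 * Complex.exp (↑p.2 * I) : ℂ)‖ = |p.1| := by
    intro p; simp [Complex.norm_exp_ofReal_mul_I]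
  have hc1 : Continuous h₁ := by fun_prop
  have hc2 : Continuous h₂ := by fun_prop
  have hz1 : ∀ p : ℝ × ℝ, R' < p.1 → h₁ p = 0 := by
    intro p hp
    have : R' < ‖(↑p.1 * Complex.exp (↑p.2 * I) : ℂ)‖ := by
      rw [habs, abs_of_pos (hR0.trans hp)]; exact hp
    simp [hh₁, hDz _ this]
  have hz2 : ∀ p : ℝ × ℝ, R' < p.1 → h₂ p = 0 := by
    intro p hp
    have : R' < ‖(↑p.1 * Complex.exp (↑p.2 * I) : ℂ)‖ := by
      rw [habs, abs_of_pos (hR0.trans hp)]; exact hp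
    simp [hh₂, hDz _ this]
  have hi1 : IntegrableOn h₁ (Ioi (0:ℝ) ×ˢ Ioo (-π) π) := aux_integrableOn hc1 hR0 hz1
  have hi2 : IntegrableOn h₂ (Ioi (0:ℝ) ×ˢ Ioo (-π) π) := aux_integrableOn hc2 hR0 hz2
  -- pointwise identity
  have hpt : ∀ p ∈ Ioi (0:ℝ) ×ˢ Ioo (-π) π,
      p.1 • (wirtingerDz F (Complex.polarCoord.symm p) *
        (-((starRingEnd ℂ) (Complex.polarCoord.symm p)))⁻¹)
      = (-(1/2) : ℂ) * (h₁ p - I * h₂ p) := by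
    rintro ⟨r, θ⟩ ⟨hr, _⟩
    simp only at hr ⊢
    have hrne : (r:ℂ) ≠ 0 := by exact_mod_cast (ne_of_gt hr)
    rw [hcsymm]
    set w : ℂ := ↑r * Complex.exp (↑θ * I) with hw
    have hE : Complex.exp ((↑θ : ℂ) * I) = ↑(Real.cos θ) + ↑(Real.sin θ) * I := by
      rw [Complex.exp_mul_I, ← Complex.ofReal_cos, ← Complex.ofReal_sin]
    have hconj : (starRingEnd ℂ) w = ↑r * (↑(Real.cos θ) - ↑(Real.sin θ) * I) := by
      rw [hw, hE]
      simp only [map_mul, map_add, Complex.conj_ofReal, Complex.conj_I]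
      ring
    have hinv : (-((starRingEnd ℂ) w))⁻¹ = -((↑r)⁻¹ * (↑(Real.cos θ) + ↑(Real.sin θ) * I)) := by
      rw [hconj]
      have h1 : (↑(Real.cos θ):ℂ)^2 + (↑(Real.sin θ):ℂ)^2 = 1 := by
        exact_mod_cast congrArg (Complex.ofReal) (Real.cos_sq_add_sin_sq θ)
      have h2 : ((↑(Real.cos θ):ℂ) - ↑(Real.sin θ)*I) * (↑(Real.cos θ) + ↑(Real.sin θ)*I) = 1 := by
        linear_combination h1 - (↑(Real.sin θ):ℂ)^2 * Complex.I_sq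
      apply inv_eq_of_mul_eq_one_left
      have h3 : (↑r:ℂ)⁻¹ * ↑r = 1 := inv_mul_cancel₀ hrne
      linear_combination (((↑(Real.cos θ):ℂ) - ↑(Real.sin θ)*I) * (↑(Real.cos θ) + ↑(Real.sin θ)*I)) * h3 + h2
    have hd1 : h₁ (r, θ) = ↑(Real.cos θ) * D w 1 + ↑(Real.sin θ) * D w I := by
      rw [hh₁]
      simp only
      rw [← hw, hE]
      have : (↑(Real.cos θ) + ↑(Real.sin θ) * I : ℂ)
          = (Real.cos θ) • (1:ℂ) + (Real.sin θ) • (I:ℂ) := by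
        simp [Complex.real_smul]
      rw [this, map_add, (D w).map_smul, (D w).map_smul, Complex.real_smul, Complex.real_smul]
    have hd2 : h₂ (r, θ) = -↑(Real.sin θ) * D w 1 + ↑(Real.cos θ) * D w I := by
      rw [hh₂]
      simp only
      rw [← hw, hE]
      have : ((↑(Real.cos θ) + ↑(Real.sin θ) * I) * I : ℂ)
          = (-Real.sin θ) • (1:ℂ) + (Real.cos θ) • (I:ℂ) := by
        rw [Complex.real_smul, Complex.real_smul]
        push_cast
        linear_combination (Complex.sin (θ:ℂ)) * Complex.I_sq
      rw [this, map_add, (D w).map_smul, (D w).map_smul, Complex.real_smul, Complex.real_smul]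
      push_cast
      ring
    rw [wirtingerDz, hinv, hd1, hd2, Complex.real_smul, ← hD]
    field_simp
    linear_combination ((D w) I * ↑(Real.sin θ)) * Complex.I_sq
  rw [setIntegral_congr_fun ((measurableSet_Ioi.prod measurableSet_Ioo)) hpt]
  rw [integral_const_mul, integral_sub hi1 (hi2.const_mul _), integral_const_mul]
  -- A : integral of h₁
  have hA : (∫ p in Ioi (0:ℝ) ×ˢ Ioo (-π) π, h₁ p) = (2 * π) • (-F 0) := by
    rw [setIntegral_prod_symm' h₁ hi1]
    have hinner : ∀ θ ∈ Ioo (-π) π, (∫ r in Ioi (0:ℝ), h₁ (r, θ)) = -F 0 := by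
      intro θ _
      set e : ℂ := Complex.exp (↑θ * I) with he
      have hderiv : ∀ r : ℝ, HasDerivAt (fun r : ℝ => F (↑r * e)) (h₁ (r, θ)) r := by
        intro r
        have hc : HasDerivAt (fun r : ℝ => (↑r * e : ℂ)) e r := by
          simpa using (Complex.ofRealCLM.hasDerivAt (x := r)).mul_const e
        have hF' : HasFDerivAt F (D (↑r * e)) (↑r * e) :=
          (hF.differentiable one_ne_zero _).hasFDerivAt
        exact hF'.comp_hasDerivAt r hc
      have hint : IntegrableOn (fun r => h₁ (r, θ)) (Ioi (0:ℝ)) := by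
        apply aux_integrableOn1 (by fun_prop) hR0
        intro r hr; exact hz1 (r, θ) hr
      have htend : Filter.Tendsto (fun r : ℝ => F (↑r * e)) Filter.atTop (nhds 0) := by
        apply Filter.Tendsto.congr' _ tendsto_const_nhds
        filter_upwards [Filter.Ioi_mem_atTop R'] with r hr
        have : R' < ‖(↑r * e : ℂ)‖ := by
          rw [he, habs (r, θ), abs_of_pos (hR0.trans hr)]
          exact hr
        exact (hFz _ this).symm
      have := integral_Ioi_of_hasDerivAt_of_tendsto
        (f := fun r : ℝ => F (↑r * e)) (a := 0)
        ((hderiv 0).continuousAt.continuousWithinAt)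
        (fun r _ => hderiv r) hint htend
      rw [this]
      simp
    rw [setIntegral_congr_fun measurableSet_Ioo hinner, setIntegral_const,
      Real.volume_real_Ioo_of_le (by linarith [Real.pi_pos])]
    congr 1
    ring
  -- B : integral of h₂
  have hB : (∫ p in Ioi (0:ℝ) ×ˢ Ioo (-π) π, h₂ p) = 0 := by
    rw [Measure.volume_eq_prod, setIntegral_prod h₂ (by rw [← Measure.volume_eq_prod]; exact hi2)]
    have hinner : ∀ r ∈ Ioi (0:ℝ), (∫ θ in Ioo (-π) π, h₂ (r, θ)) = 0 := by
      intro r hr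
      have hrne : (r:ℂ) ≠ 0 := by exact_mod_cast ne_of_gt hr
      have hderiv : ∀ θ : ℝ, HasDerivAt (fun θ : ℝ => F (↑r * Complex.exp (↑θ * I)))
          ((r:ℂ) * h₂ (r, θ)) θ := by
        intro θ
        have hc : HasDerivAt (fun θ : ℝ => (↑r * Complex.exp (↑θ * I) : ℂ))
            (↑r * (Complex.exp (↑θ * I) * I)) θ := by
          have h0 : HasDerivAt (fun θ : ℝ => (↑θ * I : ℂ)) I θ := by
            simpa using (Complex.ofRealCLM.hasDerivAt (x := θ)).mul_const I
          have h1 : HasDerivAt (fun θ : ℝ => Complex.exp (↑θ * I)) (Complex.exp (↑θ * I) * I) θ :=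
            h0.cexp
          simpa [mul_assoc] using h1.const_mul (↑r : ℂ)
        have hF' : HasFDerivAt F (D (↑r * Complex.exp (↑θ * I))) (↑r * Complex.exp (↑θ * I)) :=
          (hF.differentiable one_ne_zero _).hasFDerivAt
        have := hF'.comp_hasDerivAt θ hc
        have harg : D (↑r * Complex.exp (↑θ * I)) (↑r * (Complex.exp (↑θ * I) * I))
            = (r:ℂ) * h₂ (r, θ) := by
          rw [show ((r:ℂ) * (Complex.exp (↑θ * I) * I)) = r • (Complex.exp (↑θ * I) * I) by
            rw [Complex.real_smul]]
          rw [_root_.map_smul]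
          simp [hh₂, Complex.real_smul]
        rwa [harg] at this
      have h2π : (-π : ℝ) ≤ π := by linarith [Real.pi_pos]
      have hftc := intervalIntegral.integral_eq_sub_of_hasDerivAt
        (a := (-π : ℝ)) (b := (π : ℝ))
        (f := fun θ : ℝ => F (↑r * Complex.exp (↑θ * I)))
        (f' := fun θ : ℝ => (r:ℂ) * h₂ (r, θ))
        (fun θ _ => hderiv θ) (Continuous.intervalIntegrable (by fun_prop) _ _)
      rw [← integral_Ioc_eq_integral_Ioo, ← intervalIntegral.integral_of_le h2π]
      have hval : F (↑r * Complex.exp ((↑(π:ℝ)) * I)) = F (↑r * Complex.exp ((↑(-π:ℝ)) * I)) := by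
        have e1 : Complex.exp ((↑(π:ℝ)) * I) = -1 := Complex.exp_pi_mul_I
        have e2 : Complex.exp ((↑(-π:ℝ)) * I) = -1 := by
          push_cast
          rw [neg_mul, Complex.exp_neg, Complex.exp_pi_mul_I]
          norm_num
        rw [e1, e2]
      rw [intervalIntegral.integral_const_mul] at hftc
      beta_reduce at hftc
      have : (∫ θ in (-π:ℝ)..π, h₂ (r, θ)) = 0 := by
        have := hftc
        rw [hval, sub_self] at this
        exact (mul_eq_zero.mp this).resolve_left hrne
      exact this
    rw [setIntegral_congr_fun measurableSet_Ioi hinner]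
    simp
  rw [hA, hB, Complex.real_smul]
  push_cast
  ring

/-- Cauchy–Pompeiu recovery formula for the operator `∂ = ∂/∂z`, whose fundamental
solution is `1/(π conj z)`. -/
theorem cauchy_pompeiu_dz (F : ℂ → ℂ) (hF : ContDiff ℝ 1 F)
    (hsupp : HasCompactSupport F) (z : ℂ) :
    F z = (1 / (Real.pi : ℂ)) *
      ∫ w : ℂ, wirtingerDz F w * ((starRingEnd ℂ) z - (starRingEnd ℂ) w)⁻¹ := by
  set G : ℂ → ℂ := fun w => F (w + z) with hG
  have hGc : ContDiff ℝ 1 G := hF.comp (contDiff_id.add contDiff_const)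
  have hGsupp : HasCompactSupport G := hsupp.comp_homeomorph (Homeomorph.addRight z)
  have hfderiv : ∀ w : ℂ, fderiv ℝ G w = fderiv ℝ F (w + z) := by
    intro w
    have h1 : HasFDerivAt (fun w : ℂ => w + z) (ContinuousLinearMap.id ℝ ℂ) w :=
      (hasFDerivAt_id w).add_const z
    have h2 : HasFDerivAt F (fderiv ℝ F (w + z)) (w + z) :=
      (hF.differentiable one_ne_zero _).hasFDerivAt
    have h3 := h2.comp w h1
    simpa [Function.comp_def, hG] using h3.fderiv
  have htrans : (∫ w : ℂ, wirtingerDz F w * ((starRingEnd ℂ) z - (starRingEnd ℂ) w)⁻¹)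
      = ∫ w : ℂ, wirtingerDz G w * (-((starRingEnd ℂ) w))⁻¹ := by
    rw [← integral_add_right_eq_self
      (fun w => wirtingerDz F w * ((starRingEnd ℂ) z - (starRingEnd ℂ) w)⁻¹) z]
    congr 1
    funext w
    have h1 : wirtingerDz F (w + z) = wirtingerDz G w := by
      rw [wirtingerDz, wirtingerDz, hfderiv w]
    have h2 : (starRingEnd ℂ) z - (starRingEnd ℂ) (w + z) = -((starRingEnd ℂ) w) := by
      rw [map_add]; ring
    rw [h1, h2]
  rw [htrans, key G hGc hGsupp]
  have hπ : (Real.pi : ℂ) ≠ 0 := by exact_mod_cast Real.pi_ne_zero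
  have : G 0 = F z := by simp [hG]
  rw [this]
  field_simp
end

section
/- Let ψ : ℂ → ℝ be twice continuously differentiable and let u : ℂ → ℂ be twice continuously differentiable with compact support. Then ∫_ℂ |−∂u/∂z + (∂ψ/∂z)·u|² dm = ∫_ℂ |∂u/∂z̄ + (∂ψ/∂z̄)·u|² dm + 2 ∫_ℂ (∂²ψ/∂z∂z̄)·|u|² dm. -/
open MeasureTheory Complex

section Aux

variable {E : Type*} [NormedAddCommGroup E] [NormedSpace ℝ E] [CompleteSpace E]

lemma bk_integral_deriv_zero (f : ℝ → E) (hf : ContDiff ℝ 1 f) (h : HasCompactSupport f) :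
    ∫ x : ℝ, deriv f x = 0 := by
  have h1 := h.integral_Ioi_deriv_eq hf 0
  have h2 := h.integral_Iic_deriv_eq hf 0
  have hint : Integrable (deriv f) :=
    (hf.continuous_deriv le_rfl).integrable_of_hasCompactSupport h.deriv
  rw [← intervalIntegral.integral_Iic_add_Ioi hint.integrableOn hint.integrableOn, h1, h2]
  abel

lemma bk_line_closedEmbedding (y : ℝ) :
    Topology.IsClosedEmbedding (fun t : ℝ => (t : ℂ) + y * I) := by
  refine Isometry.isClosedEmbedding (fun a b => ?_)
  simp only [edist_dist, Complex.dist_eq, Real.dist_eq, add_sub_add_right_eq_sub,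
    ← Complex.ofReal_sub, Complex.norm_real, Real.norm_eq_abs]

lemma bk_line2_closedEmbedding (x : ℝ) :
    Topology.IsClosedEmbedding (fun t : ℝ => (x : ℂ) + t * I) := by
  refine Isometry.isClosedEmbedding (fun a b => ?_)
  simp only [edist_dist, Complex.dist_eq, Real.dist_eq, add_sub_add_left_eq_sub,
    ← sub_mul, ← Complex.ofReal_sub, map_mul, norm_mul, Complex.norm_real, Real.norm_eq_abs, Complex.norm_I, mul_one]

lemma bk_hasDerivAt_line (y : ℝ) (x : ℝ) : HasDerivAt (fun t : ℝ => (t : ℂ) + y * I) 1 x := by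
  simpa using (Complex.ofRealCLM.hasDerivAt (x := x)).add_const ((y : ℂ) * I)

lemma bk_hasDerivAt_line2 (x : ℝ) (y : ℝ) : HasDerivAt (fun t : ℝ => (x : ℂ) + t * I) I y := by
  have : HasDerivAt (fun t : ℝ => (t : ℂ) * I) I y := by
    simpa using (Complex.ofRealCLM.hasDerivAt (x := y)).mul_const I
  simpa using this.const_add (x : ℂ)

/-- `∫_ℂ ∂f/∂x = 0` for compactly supported C¹ `f`. -/
lemma bk_integral_fderiv_one (f : ℂ → E) (hf : ContDiff ℝ 1 f) (h : HasCompactSupport f) :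
    ∫ w : ℂ, fderiv ℝ f w 1 = 0 := by
  have hFc : Continuous (fun w => fderiv ℝ f w 1) :=
    (hf.continuous_fderiv one_ne_zero).clm_apply continuous_const
  have hFs : HasCompactSupport (fun w => fderiv ℝ f w 1) := h.fderiv_apply ℝ 1
  have hint : Integrable (fun w => fderiv ℝ f w 1) :=
    hFc.integrable_of_hasCompactSupport hFs
  have hmp := (Complex.volume_preserving_equiv_real_prod.symm Complex.measurableEquivRealProd)
  rw [← hmp.integral_comp Complex.measurableEquivRealProd.symm.measurableEmbedding]
  have hintp : Integrable (fun p : ℝ × ℝ =>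
      fderiv ℝ f (Complex.measurableEquivRealProd.symm p) 1) :=
    (hmp.integrable_comp_emb Complex.measurableEquivRealProd.symm.measurableEmbedding).2 hint
  rw [Measure.volume_eq_prod] at hintp ⊢
  rw [integral_prod_symm _ hintp]
  have : ∀ y : ℝ, ∫ x : ℝ, fderiv ℝ f (Complex.measurableEquivRealProd.symm (x, y)) 1 = 0 := by
    intro y
    have key : ∀ x : ℝ, deriv (fun t : ℝ => f ((t : ℂ) + y * I)) x
        = fderiv ℝ f ((x : ℂ) + y * I) 1 := by
      intro x
      exact ((hf.differentiable one_ne_zero _).hasFDerivAt.comp_hasDerivAt x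
        (bk_hasDerivAt_line y x)).deriv
    have hcs : HasCompactSupport (fun t : ℝ => f ((t : ℂ) + y * I)) :=
      h.comp_isClosedEmbedding (bk_line_closedEmbedding y)
    have hcd : ContDiff ℝ 1 (fun t : ℝ => f ((t : ℂ) + y * I)) :=
      hf.comp ((Complex.ofRealCLM.contDiff).add contDiff_const)
    have := bk_integral_deriv_zero _ hcd hcs
    simp only [key] at this
    convert this using 2 with x
    simp [Complex.measurableEquivRealProd_symm_apply, Complex.mk_eq_add_mul_I]
  simp only [Complex.measurableEquivRealProd_symm_apply] at this
  simp only [Complex.measurableEquivRealProd_symm_apply, this, integral_zero]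

/-- `∫_ℂ ∂f/∂y = 0` for compactly supported C¹ `f`. -/
lemma bk_integral_fderiv_I (f : ℂ → E) (hf : ContDiff ℝ 1 f) (h : HasCompactSupport f) :
    ∫ w : ℂ, fderiv ℝ f w I = 0 := by
  have hFc : Continuous (fun w => fderiv ℝ f w I) :=
    (hf.continuous_fderiv one_ne_zero).clm_apply continuous_const
  have hFs : HasCompactSupport (fun w => fderiv ℝ f w I) := h.fderiv_apply ℝ I
  have hint : Integrable (fun w => fderiv ℝ f w I) :=
    hFc.integrable_of_hasCompactSupport hFs
  have hmp := (Complex.volume_preserving_equiv_real_prod.symm Complex.measurableEquivRealProd)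
  rw [← hmp.integral_comp Complex.measurableEquivRealProd.symm.measurableEmbedding]
  have hintp : Integrable (fun p : ℝ × ℝ =>
      fderiv ℝ f (Complex.measurableEquivRealProd.symm p) I) :=
    (hmp.integrable_comp_emb Complex.measurableEquivRealProd.symm.measurableEmbedding).2 hint
  rw [Measure.volume_eq_prod] at hintp ⊢
  rw [integral_prod _ hintp]
  have : ∀ x : ℝ, ∫ y : ℝ, fderiv ℝ f (Complex.measurableEquivRealProd.symm (x, y)) I = 0 := by
    intro x
    have key : ∀ y : ℝ, deriv (fun t : ℝ => f ((x : ℂ) + t * I)) y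
        = fderiv ℝ f ((x : ℂ) + y * I) I := by
      intro y
      exact ((hf.differentiable one_ne_zero _).hasFDerivAt.comp_hasDerivAt y
        (bk_hasDerivAt_line2 x y)).deriv
    have hcs : HasCompactSupport (fun t : ℝ => f ((x : ℂ) + t * I)) :=
      h.comp_isClosedEmbedding (bk_line2_closedEmbedding x)
    have hcd : ContDiff ℝ 1 (fun t : ℝ => f ((x : ℂ) + t * I)) :=
      hf.comp (contDiff_const.add ((Complex.ofRealCLM.contDiff).mul contDiff_const))
    have := bk_integral_deriv_zero _ hcd hcs
    simp only [key] at this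
    convert this using 2 with y
    simp [Complex.measurableEquivRealProd_symm_apply, Complex.mk_eq_add_mul_I]
  simp only [Complex.measurableEquivRealProd_symm_apply] at this
  simp only [Complex.measurableEquivRealProd_symm_apply, this, integral_zero]

/-- Integration by parts on ℂ in direction `v ∈ {1, I}`. -/
lemma bk_ibp (v : ℂ) (hv : v = 1 ∨ v = I) (f g : ℂ → ℂ) (hf : ContDiff ℝ 1 f)
    (hg : ContDiff ℝ 1 g) (hc : HasCompactSupport g) :
    ∫ w : ℂ, fderiv ℝ f w v * g w = - ∫ w : ℂ, f w * fderiv ℝ g w v := by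
  have hfg : ContDiff ℝ 1 (fun w => f w * g w) := hf.mul hg
  have hcs : HasCompactSupport (fun w => f w * g w) := hc.mul_left
  have h0 : ∫ w : ℂ, fderiv ℝ (fun w => f w * g w) w v = 0 := by
    rcases hv with rfl | rfl
    · exact bk_integral_fderiv_one _ hfg hcs
    · exact bk_integral_fderiv_I _ hfg hcs
  have hpt : ∀ w : ℂ, fderiv ℝ (fun w => f w * g w) w v
      = f w * fderiv ℝ g w v + fderiv ℝ f w v * g w := by
    intro w
    rw [fderiv_fun_mul (hf.differentiable one_ne_zero w) (hg.differentiable one_ne_zero w)]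
    simp [mul_comm]
  rw [funext hpt] at h0
  have h1 : Integrable (fun w => f w * fderiv ℝ g w v) :=
    ((hf.continuous).mul ((hg.continuous_fderiv one_ne_zero).clm_apply continuous_const)
      ).integrable_of_hasCompactSupport ((hc.fderiv_apply ℝ v).mul_left)
  have h2 : Integrable (fun w => fderiv ℝ f w v * g w) :=
    (((hf.continuous_fderiv one_ne_zero).clm_apply continuous_const).mul hg.continuous
      ).integrable_of_hasCompactSupport hc.mul_left
  rw [integral_add h1 h2] at h0
  exact eq_neg_of_add_eq_zero_left (by rw [add_comm]; exact h0)

/-- Symmetry of second derivatives for C² functions. -/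
lemma bk_fderiv_swap (f : ℂ → E) (hf : ContDiff ℝ 2 f) (z v v' : ℂ) :
    fderiv ℝ (fun w => fderiv ℝ f w v) z v' = fderiv ℝ (fun w => fderiv ℝ f w v') z v := by
  have hd : DifferentiableAt ℝ (fderiv ℝ f) z :=
    (hf.fderiv_right (m := 1) le_rfl).differentiable one_ne_zero z
  have h1 : ∀ v : ℂ, fderiv ℝ (fun w => fderiv ℝ f w v) z
      = (fderiv ℝ (fderiv ℝ f) z).flip v := by
    intro v
    rw [fderiv_clm_apply hd (differentiableAt_const v)]
    simp
  have hsymm := (hf.contDiffAt (x := z)).isSymmSndFDerivAt (by simp [minSmoothness_of_isRCLikeNormedField])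
  rw [h1 v, h1 v']
  exact (hsymm v' v).symm ▸ rfl

lemma bk_fderiv_conj {z : ℂ} (u : ℂ → ℂ) (hu : DifferentiableAt ℝ u z) (v : ℂ) :
    fderiv ℝ (fun w => (starRingEnd ℂ) (u w)) z v = (starRingEnd ℂ) (fderiv ℝ u z v) := by
  have h : fderiv ℝ ((fun x : ℂ => (starRingEnd ℂ) x) ∘ u) z
      = (fderiv ℝ (fun x : ℂ => (starRingEnd ℂ) x) (u z)).comp (fderiv ℝ u z) :=
    fderiv_comp z (Complex.conjCLE.differentiableAt) hu
  have h2 : fderiv ℝ (fun x : ℂ => (starRingEnd ℂ) x) (u z)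
      = Complex.conjCLE.toContinuousLinearMap := Complex.conjCLE.fderiv
  calc fderiv ℝ (fun w => (starRingEnd ℂ) (u w)) z v
      = ((fderiv ℝ (fun x : ℂ => (starRingEnd ℂ) x) (u z)).comp (fderiv ℝ u z)) v := by
        rw [← h]; rfl
    _ = (starRingEnd ℂ) (fderiv ℝ u z v) := by rw [h2]; rfl

lemma bk_fderiv_ofReal {z : ℂ} (p : ℂ → ℝ) (hp : DifferentiableAt ℝ p z) (v : ℂ) :
    fderiv ℝ (fun w => ((p w : ℝ) : ℂ)) z v = ((fderiv ℝ p z v : ℝ) : ℂ) := by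
  have h : fderiv ℝ ((fun x : ℝ => (x : ℂ)) ∘ p) z
      = (fderiv ℝ (fun x : ℝ => (x : ℂ)) (p z)).comp (fderiv ℝ p z) :=
    fderiv_comp z (Complex.ofRealCLM.differentiableAt) hp
  have h2 : fderiv ℝ (fun x : ℝ => (x : ℂ)) (p z) = Complex.ofRealCLM :=
    Complex.ofRealCLM.fderiv
  calc fderiv ℝ (fun w => ((p w : ℝ) : ℂ)) z v
      = ((fderiv ℝ (fun x : ℝ => (x : ℂ)) (p z)).comp (fderiv ℝ p z)) v := by rw [← h]; rfl
    _ = ((fderiv ℝ p z v : ℝ) : ℂ) := by rw [h2]; rfl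

lemma bk_ptwise (X Y U : ℂ) (p q px qy : ℝ) :
    ‖-((X - I*Y)/2) + (((p:ℂ) - I*q)/2)*U‖^2
    - ‖(X + I*Y)/2 + (((p:ℂ) + I*q)/2)*U‖^2
    - 2*(((px + qy)/4) * ‖U‖^2)
    = -(X * (starRingEnd ℂ) Y).im
      + (-(1/2)) * (((p:ℂ) * (X * (starRingEnd ℂ) U + U * (starRingEnd ℂ) X)
          + (q:ℂ) * (Y * (starRingEnd ℂ) U + U * (starRingEnd ℂ) Y)).re)
      + (-(1/2)) * ((((px:ℂ) + (qy:ℂ)) * (U * (starRingEnd ℂ) U)).re) := by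
  simp only [Complex.sq_norm, Complex.normSq_apply]
  simp [Complex.mul_re, Complex.mul_im, Complex.add_re, Complex.add_im, Complex.sub_re,
    Complex.sub_im, Complex.neg_re, Complex.neg_im, Complex.div_re, Complex.div_im,
    Complex.normSq_apply, Complex.conj_re, Complex.conj_im, Complex.I_re, Complex.I_im,
    Complex.ofReal_re, Complex.ofReal_im]
  ring

end Aux

section Int1

/-- `∫ Im (∂₁u ⬝ conj ∂_I u) = 0` for compactly supported C² u. -/
lemma bk_int1 (u : ℂ → ℂ) (hu : ContDiff ℝ 2 u) (hsupp : HasCompactSupport u) :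
    ∫ w : ℂ, (fderiv ℝ u w 1 * (starRingEnd ℂ) (fderiv ℝ u w I)).im = 0 := by
  have hud : Differentiable ℝ u := hu.differentiable two_ne_zero
  set ub : ℂ → ℂ := fun w => (starRingEnd ℂ) (u w) with hub_def
  have hub2 : ContDiff ℝ 2 ub :=
    Complex.conjCLE.toContinuousLinearMap.contDiff.comp hu
  have hubs : HasCompactSupport ub := hsupp.comp_left (map_zero _)
  have hXub1 : ContDiff ℝ 1 (fun w => fderiv ℝ ub w 1) :=
    (hub2.fderiv_right (m := 1) (by norm_num)).clm_apply contDiff_const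
  have hYub1 : ContDiff ℝ 1 (fun w => fderiv ℝ ub w I) :=
    (hub2.fderiv_right (m := 1) (by norm_num)).clm_apply contDiff_const
  have hconj : ∀ w v, fderiv ℝ ub w v = (starRingEnd ℂ) (fderiv ℝ u w v) :=
    fun w v => bk_fderiv_conj u (hud w) v
  have s1 : ∫ w : ℂ, fderiv ℝ u w 1 * fderiv ℝ ub w I
      = - ∫ w : ℂ, u w * fderiv ℝ (fun w' => fderiv ℝ ub w' I) w 1 :=
    bk_ibp 1 (Or.inl rfl) u _ (hu.of_le one_le_two) hYub1 (hubs.fderiv_apply ℝ I)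
  have s2 : ∫ w : ℂ, fderiv ℝ u w I * fderiv ℝ ub w 1
      = - ∫ w : ℂ, u w * fderiv ℝ (fun w' => fderiv ℝ ub w' 1) w I :=
    bk_ibp I (Or.inr rfl) u _ (hu.of_le one_le_two) hXub1 (hubs.fderiv_apply ℝ 1)
  have hswap : ∀ w : ℂ, fderiv ℝ (fun w' => fderiv ℝ ub w' I) w 1
      = fderiv ℝ (fun w' => fderiv ℝ ub w' 1) w I := fun w => bk_fderiv_swap ub hub2 w I 1
  have hJ : ∫ w : ℂ, fderiv ℝ u w 1 * fderiv ℝ ub w I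
      = ∫ w : ℂ, fderiv ℝ u w I * fderiv ℝ ub w 1 := by
    rw [s1, s2]
    congr 1
    exact integral_congr_ae (Filter.Eventually.of_forall fun w => by beta_reduce; rw [hswap w])
  have hconjJ : ∫ w : ℂ, fderiv ℝ u w I * fderiv ℝ ub w 1
      = (starRingEnd ℂ) (∫ w : ℂ, fderiv ℝ u w 1 * fderiv ℝ ub w I) := by
    rw [← integral_conj]
    congr 1
    funext w
    rw [hconj w 1, hconj w I]
    simp [mul_comm]
  have him : (∫ w : ℂ, fderiv ℝ u w 1 * fderiv ℝ ub w I).im = 0 := by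
    have := hJ.trans hconjJ
    have h2 := congrArg Complex.im this
    simp only [Complex.conj_im] at h2
    linarith
  have hInt : Integrable (fun w : ℂ => fderiv ℝ u w 1 * fderiv ℝ ub w I) := by
    refine Continuous.integrable_of_hasCompactSupport ?_ ?_
    · exact ((hu.continuous_fderiv two_ne_zero).clm_apply continuous_const).mul
        ((hub2.continuous_fderiv two_ne_zero).clm_apply continuous_const)
    · exact (hsupp.fderiv_apply ℝ 1).mul_right
  calc ∫ w : ℂ, (fderiv ℝ u w 1 * (starRingEnd ℂ) (fderiv ℝ u w I)).im
      = ∫ w : ℂ, (fderiv ℝ u w 1 * fderiv ℝ ub w I).im := by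
        refine integral_congr_ae (Filter.Eventually.of_forall fun w => ?_)
        beta_reduce
        rw [hconj w I]
    _ = (∫ w : ℂ, fderiv ℝ u w 1 * fderiv ℝ ub w I).im := by
        simpa using integral_im hInt
    _ = 0 := him

end Int1

/-- IBP consequence for the weight: moves derivatives of ψ onto `|u|²`. -/
lemma bk_int2 (ψ : ℂ → ℝ) (hψ : ContDiff ℝ 2 ψ) (u : ℂ → ℂ) (hu : ContDiff ℝ 2 u)
    (hsupp : HasCompactSupport u) :
    ∫ w : ℂ, (((fderiv ℝ ψ w 1 : ℝ) : ℂ) *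
        (fderiv ℝ u w 1 * (starRingEnd ℂ) (u w) + u w * (starRingEnd ℂ) (fderiv ℝ u w 1))
      + ((fderiv ℝ ψ w I : ℝ) : ℂ) *
        (fderiv ℝ u w I * (starRingEnd ℂ) (u w) + u w * (starRingEnd ℂ) (fderiv ℝ u w I)))
    = - ∫ w : ℂ, (((fderiv ℝ (fun w' => fderiv ℝ ψ w' 1) w 1 : ℝ) : ℂ)
        + ((fderiv ℝ (fun w' => fderiv ℝ ψ w' I) w I : ℝ) : ℂ)) * (u w * (starRingEnd ℂ) (u w)) := by
  have hud : Differentiable ℝ u := hu.differentiable two_ne_zero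
  set ub : ℂ → ℂ := fun w => (starRingEnd ℂ) (u w) with hub_def
  have hub2 : ContDiff ℝ 2 ub := Complex.conjCLE.toContinuousLinearMap.contDiff.comp hu
  have hubd : Differentiable ℝ ub := hub2.differentiable two_ne_zero
  set G : ℂ → ℂ := fun w => u w * ub w with hG_def
  have hG1 : ContDiff ℝ 1 G := (hu.of_le one_le_two).mul (hub2.of_le one_le_two)
  have hGs : HasCompactSupport G := hsupp.mul_right
  -- chain rule for G
  have hDG : ∀ (w v : ℂ), fderiv ℝ G w v
      = fderiv ℝ u w v * (starRingEnd ℂ) (u w) + u w * (starRingEnd ℂ) (fderiv ℝ u w v) := by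
    intro w v
    have h := fderiv_fun_mul (hud w) (hubd w)
    have h2 := congrArg (fun L : ℂ →L[ℝ] ℂ => L v) h
    simp only [ContinuousLinearMap.add_apply, ContinuousLinearMap.coe_smul',
      Pi.smul_apply, smul_eq_mul] at h2
    rw [hG_def]
    show fderiv ℝ (fun w => u w * ub w) w v = _
    rw [h2, bk_fderiv_conj u (hud w) v]
    ring
  -- the two weight derivative functions
  have hp1 : ContDiff ℝ 1 (fun w => fderiv ℝ ψ w 1) :=
    (hψ.fderiv_right (m := 1) (by norm_num)).clm_apply contDiff_const
  have hq1 : ContDiff ℝ 1 (fun w => fderiv ℝ ψ w I) :=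
    (hψ.fderiv_right (m := 1) (by norm_num)).clm_apply contDiff_const
  have hP1 : ContDiff ℝ 1 (fun w => ((fderiv ℝ ψ w 1 : ℝ) : ℂ)) :=
    Complex.ofRealCLM.contDiff.comp hp1
  have hQ1 : ContDiff ℝ 1 (fun w => ((fderiv ℝ ψ w I : ℝ) : ℂ)) :=
    Complex.ofRealCLM.contDiff.comp hq1
  have e1 : ∫ w : ℂ, ((fderiv ℝ ψ w 1 : ℝ) : ℂ) * fderiv ℝ G w 1
      = - ∫ w : ℂ, ((fderiv ℝ (fun w' => fderiv ℝ ψ w' 1) w 1 : ℝ) : ℂ) * G w := by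
    have h := bk_ibp 1 (Or.inl rfl) _ G hP1 hG1 hGs
    have hcast : (fun w : ℂ => fderiv ℝ (fun w' => ((fderiv ℝ ψ w' 1 : ℝ) : ℂ)) w 1 * G w)
        = fun w : ℂ => ((fderiv ℝ (fun w' => fderiv ℝ ψ w' 1) w 1 : ℝ) : ℂ) * G w := by
      funext w
      rw [bk_fderiv_ofReal _ (hp1.differentiable one_ne_zero w) 1]
    rw [hcast] at h
    rw [h, neg_neg]
  have e2 : ∫ w : ℂ, ((fderiv ℝ ψ w I : ℝ) : ℂ) * fderiv ℝ G w I
      = - ∫ w : ℂ, ((fderiv ℝ (fun w' => fderiv ℝ ψ w' I) w I : ℝ) : ℂ) * G w := by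
    have h := bk_ibp I (Or.inr rfl) _ G hQ1 hG1 hGs
    have hcast : (fun w : ℂ => fderiv ℝ (fun w' => ((fderiv ℝ ψ w' I : ℝ) : ℂ)) w I * G w)
        = fun w : ℂ => ((fderiv ℝ (fun w' => fderiv ℝ ψ w' I) w I : ℝ) : ℂ) * G w := by
      funext w
      rw [bk_fderiv_ofReal _ (hq1.differentiable one_ne_zero w) I]
    rw [hcast] at h
    rw [h, neg_neg]
  -- integrabilities
  have contDG1 : Continuous (fun w => fderiv ℝ G w 1) :=
    (hG1.continuous_fderiv one_ne_zero).clm_apply continuous_const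
  have contDGI : Continuous (fun w => fderiv ℝ G w I) :=
    (hG1.continuous_fderiv one_ne_zero).clm_apply continuous_const
  have i1 : Integrable (fun w : ℂ => ((fderiv ℝ ψ w 1 : ℝ) : ℂ) * fderiv ℝ G w 1) :=
    (hP1.continuous.mul contDG1).integrable_of_hasCompactSupport
      ((hGs.fderiv_apply ℝ 1).mul_left)
  have i2 : Integrable (fun w : ℂ => ((fderiv ℝ ψ w I : ℝ) : ℂ) * fderiv ℝ G w I) :=
    (hQ1.continuous.mul contDGI).integrable_of_hasCompactSupport
      ((hGs.fderiv_apply ℝ I).mul_left)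
  have contpx : Continuous (fun w : ℂ => ((fderiv ℝ (fun w' => fderiv ℝ ψ w' 1) w 1 : ℝ) : ℂ)) :=
    Complex.continuous_ofReal.comp ((hp1.continuous_fderiv one_ne_zero).clm_apply continuous_const)
  have contqy : Continuous (fun w : ℂ => ((fderiv ℝ (fun w' => fderiv ℝ ψ w' I) w I : ℝ) : ℂ)) :=
    Complex.continuous_ofReal.comp ((hq1.continuous_fderiv one_ne_zero).clm_apply continuous_const)
  have i3 : Integrable (fun w : ℂ =>
      ((fderiv ℝ (fun w' => fderiv ℝ ψ w' 1) w 1 : ℝ) : ℂ) * G w) :=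
    (contpx.mul hG1.continuous).integrable_of_hasCompactSupport hGs.mul_left
  have i4 : Integrable (fun w : ℂ =>
      ((fderiv ℝ (fun w' => fderiv ℝ ψ w' I) w I : ℝ) : ℂ) * G w) :=
    (contqy.mul hG1.continuous).integrable_of_hasCompactSupport hGs.mul_left
  calc ∫ w : ℂ, (((fderiv ℝ ψ w 1 : ℝ) : ℂ) *
        (fderiv ℝ u w 1 * (starRingEnd ℂ) (u w) + u w * (starRingEnd ℂ) (fderiv ℝ u w 1))
      + ((fderiv ℝ ψ w I : ℝ) : ℂ) *
        (fderiv ℝ u w I * (starRingEnd ℂ) (u w) + u w * (starRingEnd ℂ) (fderiv ℝ u w I)))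
      = ∫ w : ℂ, (((fderiv ℝ ψ w 1 : ℝ) : ℂ) * fderiv ℝ G w 1
        + ((fderiv ℝ ψ w I : ℝ) : ℂ) * fderiv ℝ G w I) := by
        refine integral_congr_ae (Filter.Eventually.of_forall fun w => ?_)
        beta_reduce
        rw [hDG w 1, hDG w I]
    _ = (∫ w : ℂ, ((fderiv ℝ ψ w 1 : ℝ) : ℂ) * fderiv ℝ G w 1)
        + ∫ w : ℂ, ((fderiv ℝ ψ w I : ℝ) : ℂ) * fderiv ℝ G w I := integral_add i1 i2
    _ = - ((∫ w : ℂ, ((fderiv ℝ (fun w' => fderiv ℝ ψ w' 1) w 1 : ℝ) : ℂ) * G w)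
        + ∫ w : ℂ, ((fderiv ℝ (fun w' => fderiv ℝ ψ w' I) w I : ℝ) : ℂ) * G w) := by
        rw [e1, e2]; ring
    _ = - ∫ w : ℂ, (((fderiv ℝ (fun w' => fderiv ℝ ψ w' 1) w 1 : ℝ) : ℂ)
        + ((fderiv ℝ (fun w' => fderiv ℝ ψ w' I) w I : ℝ) : ℂ)) * (u w * (starRingEnd ℂ) (u w)) := by
        rw [← integral_add i3 i4]
        congr 1
        refine integral_congr_ae (Filter.Eventually.of_forall fun w => ?_)
        beta_reduce
        ring


/-- The Wirtinger derivative `∂f/∂z̄ = (∂f/∂x + i ∂f/∂y)/2`. -/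
noncomputable def wirtingerDzbar (f : ℂ → ℂ) (z : ℂ) : ℂ :=
  (fderiv ℝ f z 1 + Complex.I * fderiv ℝ f z Complex.I) / 2

/-- `∂ψ/∂z` for a real-valued `ψ`. -/
noncomputable def wirtingerDzR (ψ : ℂ → ℝ) (z : ℂ) : ℂ :=
  ((fderiv ℝ ψ z 1 : ℝ) - Complex.I * (fderiv ℝ ψ z Complex.I : ℝ)) / 2

/-- `∂ψ/∂z̄` for a real-valued `ψ`. -/
noncomputable def wirtingerDzbarR (ψ : ℂ → ℝ) (z : ℂ) : ℂ :=
  ((fderiv ℝ ψ z 1 : ℝ) + Complex.I * (fderiv ℝ ψ z Complex.I : ℝ)) / 2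

/-- The Laplacian `Δψ = ψ_xx + ψ_yy`; `∂²ψ/∂z∂z̄ = Δψ/4`. -/
noncomputable def lapl (ψ : ℂ → ℝ) (z : ℂ) : ℝ :=
  fderiv ℝ (fun w => fderiv ℝ ψ w 1) z 1 +
    fderiv ℝ (fun w => fderiv ℝ ψ w Complex.I) z Complex.I

/-- One-variable Bochner–Kodaira/Hörmander integration-by-parts identity for the
weight-twisted Cauchy–Riemann operator and its formal adjoint. -/
theorem bochner_kodaira_identity (ψ : ℂ → ℝ) (hψ : ContDiff ℝ 2 ψ)
    (u : ℂ → ℂ) (hu : ContDiff ℝ 2 u) (hsupp : HasCompactSupport u) :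
    ∫ w : ℂ, ‖-wirtingerDz u w + wirtingerDzR ψ w * u w‖ ^ 2 =
      (∫ w : ℂ, ‖wirtingerDzbar u w + wirtingerDzbarR ψ w * u w‖ ^ 2) +
        2 * ∫ w : ℂ, (lapl ψ w / 4) * ‖u w‖ ^ 2 := by
  -- continuity facts
  have contX : Continuous (fun w => fderiv ℝ u w 1) :=
    (hu.continuous_fderiv two_ne_zero).clm_apply continuous_const
  have contY : Continuous (fun w => fderiv ℝ u w I) :=
    (hu.continuous_fderiv two_ne_zero).clm_apply continuous_const
  have contp : Continuous (fun w => fderiv ℝ ψ w 1) :=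
    (hψ.continuous_fderiv two_ne_zero).clm_apply continuous_const
  have contq : Continuous (fun w => fderiv ℝ ψ w I) :=
    (hψ.continuous_fderiv two_ne_zero).clm_apply continuous_const
  have hp1 : ContDiff ℝ 1 (fun w => fderiv ℝ ψ w 1) :=
    (hψ.fderiv_right (m := 1) (by norm_num)).clm_apply contDiff_const
  have hq1 : ContDiff ℝ 1 (fun w => fderiv ℝ ψ w I) :=
    (hψ.fderiv_right (m := 1) (by norm_num)).clm_apply contDiff_const
  have contpx : Continuous (fun w : ℂ => fderiv ℝ (fun w' => fderiv ℝ ψ w' 1) w 1) :=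
    (hp1.continuous_fderiv one_ne_zero).clm_apply continuous_const
  have contqy : Continuous (fun w : ℂ => fderiv ℝ (fun w' => fderiv ℝ ψ w' I) w I) :=
    (hq1.continuous_fderiv one_ne_zero).clm_apply continuous_const
  have contu : Continuous u := hu.continuous
  have contub : Continuous (fun w => (starRingEnd ℂ) (u w)) := Complex.continuous_conj.comp contu
  -- support facts
  have hXs : HasCompactSupport (fun w => fderiv ℝ u w 1) := hsupp.fderiv_apply ℝ 1
  have hYs : HasCompactSupport (fun w => fderiv ℝ u w I) := hsupp.fderiv_apply ℝ I
  -- the six real integrands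
  set A : ℂ → ℝ := fun w => ‖-wirtingerDz u w + wirtingerDzR ψ w * u w‖ ^ 2 with hA
  set B : ℂ → ℝ := fun w => ‖wirtingerDzbar u w + wirtingerDzbarR ψ w * u w‖ ^ 2 with hB
  set C : ℂ → ℝ := fun w => (lapl ψ w / 4) * ‖u w‖ ^ 2 with hC
  set R1 : ℂ → ℝ := fun w => -(fderiv ℝ u w 1 * (starRingEnd ℂ) (fderiv ℝ u w I)).im with hR1
  set Z2 : ℂ → ℂ := fun w => (((fderiv ℝ ψ w 1 : ℝ) : ℂ) *
        (fderiv ℝ u w 1 * (starRingEnd ℂ) (u w) + u w * (starRingEnd ℂ) (fderiv ℝ u w 1))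
      + ((fderiv ℝ ψ w I : ℝ) : ℂ) *
        (fderiv ℝ u w I * (starRingEnd ℂ) (u w) + u w * (starRingEnd ℂ) (fderiv ℝ u w I))) with hZ2
  set Z3 : ℂ → ℂ := fun w => (((fderiv ℝ (fun w' => fderiv ℝ ψ w' 1) w 1 : ℝ) : ℂ)
        + ((fderiv ℝ (fun w' => fderiv ℝ ψ w' I) w I : ℝ) : ℂ)) * (u w * (starRingEnd ℂ) (u w)) with hZ3
  set R2 : ℂ → ℝ := fun w => (-(1/2)) * (Z2 w).re with hR2
  set R3 : ℂ → ℝ := fun w => (-(1/2)) * (Z3 w).re with hR3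
  -- pointwise identity
  have hpt : ∀ w : ℂ, A w - B w - 2 * C w = R1 w + R2 w + R3 w := by
    intro w
    exact bk_ptwise (fderiv ℝ u w 1) (fderiv ℝ u w I) (u w)
      (fderiv ℝ ψ w 1) (fderiv ℝ ψ w I)
      (fderiv ℝ (fun w' => fderiv ℝ ψ w' 1) w 1) (fderiv ℝ (fun w' => fderiv ℝ ψ w' I) w I)
  -- integrability of A, B, C
  have hDzS : HasCompactSupport (fun w => -wirtingerDz u w + wirtingerDzR ψ w * u w) := by
    have h0 : HasCompactSupport (fun w => fderiv ℝ u w 1 - I * fderiv ℝ u w I) :=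
      hXs.comp₂_left hYs.mul_left (by simp)
    have h1 : HasCompactSupport (fun w => (fderiv ℝ u w 1 - I * fderiv ℝ u w I) / 2) :=
      h0.comp_left (g := fun z : ℂ => z / 2) (by simp)
    have h2 : HasCompactSupport (fun w => -((fderiv ℝ u w 1 - I * fderiv ℝ u w I) / 2)) :=
      h1.comp_left (g := fun z : ℂ => -z) (by simp)
    exact h2.add hsupp.mul_left
  have hDzbS : HasCompactSupport (fun w => wirtingerDzbar u w + wirtingerDzbarR ψ w * u w) := by
    have h1 : HasCompactSupport (fun w => (fderiv ℝ u w 1 + I * fderiv ℝ u w I) / 2) :=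
      (hXs.add hYs.mul_left).comp_left (g := fun z : ℂ => z / 2) (by simp)
    exact h1.add hsupp.mul_left
  have contDz : Continuous (fun w => -wirtingerDz u w + wirtingerDzR ψ w * u w) := by
    unfold wirtingerDz wirtingerDzR
    fun_prop
  have contDzb : Continuous (fun w => wirtingerDzbar u w + wirtingerDzbarR ψ w * u w) := by
    unfold wirtingerDzbar wirtingerDzbarR
    fun_prop
  have hIA : Integrable A := by
    refine Continuous.integrable_of_hasCompactSupport ?_ ?_
    · exact (contDz.norm).pow 2
    · exact hDzS.comp_left (g := fun z : ℂ => ‖z‖ ^ 2) (by simp)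
  have hIB : Integrable B := by
    refine Continuous.integrable_of_hasCompactSupport ?_ ?_
    · exact (contDzb.norm).pow 2
    · exact hDzbS.comp_left (g := fun z : ℂ => ‖z‖ ^ 2) (by simp)
  have hIC : Integrable C := by
    refine Continuous.integrable_of_hasCompactSupport ?_ ?_
    · exact ((contpx.add contqy).div_const 4).mul ((contu.norm).pow 2)
    · exact (hsupp.comp_left (g := fun z : ℂ => ‖z‖ ^ 2) (by simp)).mul_left
  -- integrability of R1, Z2, Z3
  have hIZ1 : Integrable (fun w => fderiv ℝ u w 1 * (starRingEnd ℂ) (fderiv ℝ u w I)) := by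
    refine Continuous.integrable_of_hasCompactSupport ?_ hXs.mul_right
    exact contX.mul (Complex.continuous_conj.comp contY)
  have hIR1 : Integrable R1 := by
    refine Continuous.integrable_of_hasCompactSupport ?_ ?_
    · exact (Complex.continuous_im.comp (contX.mul (Complex.continuous_conj.comp contY))).neg
    · exact hXs.mul_right.comp_left (g := fun z : ℂ => -z.im) (by simp)
  have contZ2 : Continuous Z2 := by
    rw [hZ2]
    exact ((Complex.continuous_ofReal.comp contp).mul
        ((contX.mul contub).add (contu.mul (Complex.continuous_conj.comp contX)))).add
      ((Complex.continuous_ofReal.comp contq).mul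
        ((contY.mul contub).add (contu.mul (Complex.continuous_conj.comp contY))))
  have hZ2s : HasCompactSupport Z2 := by
    rw [hZ2]
    exact ((hXs.mul_right.add hsupp.mul_right).mul_left).add
      ((hYs.mul_right.add hsupp.mul_right).mul_left)
  have hIZ2 : Integrable Z2 := contZ2.integrable_of_hasCompactSupport hZ2s
  have contZ3 : Continuous Z3 := by
    rw [hZ3]
    exact ((Complex.continuous_ofReal.comp contpx).add
      (Complex.continuous_ofReal.comp contqy)).mul (contu.mul contub)
  have hZ3s : HasCompactSupport Z3 := by
    rw [hZ3]
    exact (hsupp.mul_right.mul_left)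
  have hIZ3 : Integrable Z3 := contZ3.integrable_of_hasCompactSupport hZ3s
  have hIR2 : Integrable R2 := by
    rw [hR2]
    exact (continuous_const.mul (Complex.continuous_re.comp contZ2)).integrable_of_hasCompactSupport
      (hZ2s.comp_left (g := fun z : ℂ => (-(1/2) : ℝ) * z.re) (by simp))
  have hIR3 : Integrable R3 := by
    rw [hR3]
    exact (continuous_const.mul (Complex.continuous_re.comp contZ3)).integrable_of_hasCompactSupport
      (hZ3s.comp_left (g := fun z : ℂ => (-(1/2) : ℝ) * z.re) (by simp))
  -- the three integral evaluations
  have hI1 : ∫ w : ℂ, R1 w = 0 := by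
    rw [hR1]
    rw [integral_neg, bk_int1 u hu hsupp, neg_zero]
  have hZ23 : ∫ w : ℂ, Z2 w = - ∫ w : ℂ, Z3 w := bk_int2 ψ hψ u hu hsupp
  have hI23 : (∫ w : ℂ, R2 w) + (∫ w : ℂ, R3 w) = 0 := by
    have h2 : ∫ w : ℂ, R2 w = (-(1/2)) * (∫ w : ℂ, Z2 w).re := by
      rw [hR2]
      rw [integral_const_mul (-(1/2) : ℝ) (fun w => (Z2 w).re)]
      congr 1
      simpa using integral_re hIZ2
    have h3 : ∫ w : ℂ, R3 w = (-(1/2)) * (∫ w : ℂ, Z3 w).re := by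
      rw [hR3]
      rw [integral_const_mul (-(1/2) : ℝ) (fun w => (Z3 w).re)]
      congr 1
      simpa using integral_re hIZ3
    rw [h2, h3, hZ23]
    simp
  -- assemble
  have hsum : ∫ w : ℂ, (A w - B w - 2 * C w) = (∫ w, A w) - (∫ w, B w) - 2 * ∫ w, C w := by
    have e1 : ∫ w : ℂ, (A w - B w - 2 * C w)
        = (∫ w : ℂ, (A w - B w)) - ∫ w : ℂ, (2 * C w) :=
      integral_sub (hIA.sub hIB) (hIC.const_mul 2)
    have e2 : ∫ w : ℂ, (A w - B w) = (∫ w : ℂ, A w) - ∫ w : ℂ, B w := integral_sub hIA hIB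
    have e3 : ∫ w : ℂ, (2 * C w) = 2 * ∫ w : ℂ, C w := integral_const_mul 2 C
    rw [e1, e2, e3]
  have hsum2 : ∫ w : ℂ, (A w - B w - 2 * C w) = 0 := by
    calc ∫ w : ℂ, (A w - B w - 2 * C w) = ∫ w : ℂ, (R1 w + R2 w + R3 w) := by
          exact integral_congr_ae (Filter.Eventually.of_forall fun w => hpt w)
      _ = (∫ w, R1 w) + (∫ w, R2 w) + ∫ w, R3 w := by
          have e1 : ∫ w : ℂ, (R1 w + R2 w + R3 w)
              = (∫ w : ℂ, (R1 w + R2 w)) + ∫ w : ℂ, R3 w := integral_add (hIR1.add hIR2) hIR3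
          have e2 : ∫ w : ℂ, (R1 w + R2 w) = (∫ w : ℂ, R1 w) + ∫ w : ℂ, R2 w :=
            integral_add hIR1 hIR2
          rw [e1, e2]
      _ = 0 := by rw [hI1]; rw [zero_add]; exact hI23
  rw [hsum] at hsum2
  linarith
end

section
/- Let ψ : ℂ → ℝ be twice continuously differentiable with ∂²ψ/∂z∂z̄ ≥ a at every point, for some constant a > 0. Then for every λ > 0 and every twice continuously differentiable compactly supported u : ℂ → ℂ, ∫_ℂ |−∂u/∂z + λ(∂ψ/∂z)·u|² dm ≥ 2aλ ∫_ℂ |u|² dm. -/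
open MeasureTheory Complex

noncomputable def wDzb (f : ℂ → ℂ) (z : ℂ) : ℂ :=
  (fderiv ℝ f z 1 + Complex.I * fderiv ℝ f z Complex.I) / 2


variable {F : Type*} [NormedAddCommGroup F] [NormedSpace ℝ F]

lemma contDiff_one_fderiv_apply {f : ℂ → F} (hf : ContDiff ℝ 2 f) (v : ℂ) :
    ContDiff ℝ 1 fun z => fderiv ℝ f z v :=
  (hf.fderiv_right (by norm_num)).clm_apply contDiff_const

lemma fderiv_fderiv_apply {f : ℂ → F} (hf : ContDiff ℝ 2 f) (z v w : ℂ) :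
    fderiv ℝ (fun x => fderiv ℝ f x w) z v = fderiv ℝ (fderiv ℝ f) z v w := by
  have h1 : DifferentiableAt ℝ (fderiv ℝ f) z :=
    ((hf.fderiv_right (m := 1) (by norm_num)).differentiable one_ne_zero) z
  rw [fderiv_clm_apply h1 (differentiableAt_const w)]
  simp

lemma sderiv_symm {f : ℂ → F} (hf : ContDiff ℝ 2 f) (z v w : ℂ) :
    fderiv ℝ (fderiv ℝ f) z v w = fderiv ℝ (fderiv ℝ f) z w v :=
  (hf.contDiffAt.isSymmSndFDerivAt (by norm_num)) v w

lemma contDiff_one_wirtingerDz {f : ℂ → ℂ} (hf : ContDiff ℝ 2 f) :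
    ContDiff ℝ 1 (wirtingerDz f) :=
  ((contDiff_one_fderiv_apply hf 1).sub
    (contDiff_const.mul (contDiff_one_fderiv_apply hf Complex.I))).div_const 2

lemma contDiff_one_wDzb {f : ℂ → ℂ} (hf : ContDiff ℝ 2 f) :
    ContDiff ℝ 1 (wDzb f) :=
  ((contDiff_one_fderiv_apply hf 1).add
    (contDiff_const.mul (contDiff_one_fderiv_apply hf Complex.I))).div_const 2

lemma wirtingerDz_mul {f g : ℂ → ℂ} {z : ℂ} (hf : DifferentiableAt ℝ f z)
    (hg : DifferentiableAt ℝ g z) :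
    wirtingerDz (fun w => f w * g w) z = f z * wirtingerDz g z + g z * wirtingerDz f z := by
  unfold wirtingerDz
  rw [fderiv_fun_mul hf hg]
  simp only [ContinuousLinearMap.add_apply, ContinuousLinearMap.smul_apply, smul_eq_mul]
  ring

lemma wDzb_mul {f g : ℂ → ℂ} {z : ℂ} (hf : DifferentiableAt ℝ f z)
    (hg : DifferentiableAt ℝ g z) :
    wDzb (fun w => f w * g w) z = f z * wDzb g z + g z * wDzb f z := by
  unfold wDzb
  rw [fderiv_fun_mul hf hg]
  simp only [ContinuousLinearMap.add_apply, ContinuousLinearMap.smul_apply, smul_eq_mul]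
  ring

lemma fderiv_conj_apply {f : ℂ → ℂ} {z : ℂ} (hf : DifferentiableAt ℝ f z) (v : ℂ) :
    fderiv ℝ (fun w => (starRingEnd ℂ) (f w)) z v = (starRingEnd ℂ) (fderiv ℝ f z v) := by
  have h := ((Complex.conjCLE.toContinuousLinearMap).hasFDerivAt.comp z hf.hasFDerivAt).fderiv
  have : fderiv ℝ (fun w => (starRingEnd ℂ) (f w)) z =
      (Complex.conjCLE.toContinuousLinearMap).comp (fderiv ℝ f z) := by
    simpa [Function.comp_def] using h
  rw [this]
  simp

lemma contDiff_conj_comp {f : ℂ → ℂ} {n : ℕ∞} (hf : ContDiff ℝ n f) :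
    ContDiff ℝ n fun w => (starRingEnd ℂ) (f w) :=
  (Complex.conjCLE.toContinuousLinearMap.contDiff).comp hf

lemma wDzb_conj {f : ℂ → ℂ} {z : ℂ} (hf : DifferentiableAt ℝ f z) :
    wDzb (fun w => (starRingEnd ℂ) (f w)) z = (starRingEnd ℂ) (wirtingerDz f z) := by
  unfold wDzb wirtingerDz
  rw [fderiv_conj_apply hf, fderiv_conj_apply hf]
  simp [map_div₀, map_sub, map_ofNat]

lemma wirtingerDz_conj {f : ℂ → ℂ} {z : ℂ} (hf : DifferentiableAt ℝ f z) :
    wirtingerDz (fun w => (starRingEnd ℂ) (f w)) z = (starRingEnd ℂ) (wDzb f z) := by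
  unfold wDzb wirtingerDz
  rw [fderiv_conj_apply hf, fderiv_conj_apply hf]
  simp [map_div₀, map_add, map_ofNat]
  ring

lemma wDzb_wirtingerDz_eq {f : ℂ → ℂ} (hf : ContDiff ℝ 2 f) (z : ℂ) :
    wDzb (wirtingerDz f) z = wirtingerDz (wDzb f) z := by
  have d1 : DifferentiableAt ℝ (fun x => fderiv ℝ f x 1) z :=
    ((contDiff_one_fderiv_apply hf 1).differentiable one_ne_zero) z
  have dI : DifferentiableAt ℝ (fun x => fderiv ℝ f x Complex.I) z :=
    ((contDiff_one_fderiv_apply hf Complex.I).differentiable one_ne_zero) z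
  have e1 : wirtingerDz f = fun w => (2⁻¹ : ℂ) * fderiv ℝ f w 1
      - (Complex.I/2) * fderiv ℝ f w Complex.I := by
    funext w; unfold wirtingerDz; ring
  have e2 : wDzb f = fun w => (2⁻¹ : ℂ) * fderiv ℝ f w 1
      + (Complex.I/2) * fderiv ℝ f w Complex.I := by
    funext w; unfold wDzb; ring
  have key : ∀ v : ℂ, fderiv ℝ (wirtingerDz f) z v =
      (2⁻¹ : ℂ) * fderiv ℝ (fderiv ℝ f) z v 1
        - (Complex.I/2) * fderiv ℝ (fderiv ℝ f) z v Complex.I := by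
    intro v
    rw [e1, fderiv_fun_sub (d1.const_mul _) (dI.const_mul _), fderiv_const_mul d1,
      fderiv_const_mul dI]
    simp only [ContinuousLinearMap.coe_sub', Pi.sub_apply, ContinuousLinearMap.coe_smul',
      Pi.smul_apply, smul_eq_mul]
    rw [fderiv_fderiv_apply hf, fderiv_fderiv_apply hf]
  have key2 : ∀ v : ℂ, fderiv ℝ (wDzb f) z v =
      (2⁻¹ : ℂ) * fderiv ℝ (fderiv ℝ f) z v 1
        + (Complex.I/2) * fderiv ℝ (fderiv ℝ f) z v Complex.I := by
    intro v
    rw [e2, fderiv_fun_add (d1.const_mul _) (dI.const_mul _), fderiv_const_mul d1,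
      fderiv_const_mul dI]
    simp only [ContinuousLinearMap.add_apply, ContinuousLinearMap.coe_smul',
      Pi.smul_apply, smul_eq_mul]
    rw [fderiv_fderiv_apply hf, fderiv_fderiv_apply hf]
  have L : wDzb (wirtingerDz f) z =
      (fderiv ℝ (wirtingerDz f) z 1 + Complex.I * fderiv ℝ (wirtingerDz f) z Complex.I) / 2 := rfl
  have R : wirtingerDz (wDzb f) z =
      (fderiv ℝ (wDzb f) z 1 - Complex.I * fderiv ℝ (wDzb f) z Complex.I) / 2 := rfl
  rw [L, R, key, key, key2, key2, sderiv_symm hf z 1 Complex.I]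
  ring

lemma fderiv_ofReal_comp {ψ : ℂ → ℝ} {z : ℂ} (h : DifferentiableAt ℝ ψ z) (v : ℂ) :
    fderiv ℝ (fun w => ((ψ w : ℂ))) z v = ((fderiv ℝ ψ z v : ℝ) : ℂ) := by
  have h2 := (Complex.ofRealCLM.hasFDerivAt.comp z h.hasFDerivAt).fderiv
  have : fderiv ℝ (fun w => ((ψ w : ℂ))) z = Complex.ofRealCLM.comp (fderiv ℝ ψ z) := by
    simpa [Function.comp_def] using h2
  rw [this]; simp

lemma contDiff_ofReal_comp {ψ : ℂ → ℝ} {n : ℕ∞} (h : ContDiff ℝ n ψ) :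
    ContDiff ℝ n fun w => ((ψ w : ℂ)) :=
  Complex.ofRealCLM.contDiff.comp h

lemma wirtingerDzR_eq {ψ : ℂ → ℝ} (z : ℂ) :
    wirtingerDzR ψ z = wirtingerDz (fun w => ((ψ w : ℂ))) z := by
  by_cases h : DifferentiableAt ℝ ψ z
  · unfold wirtingerDzR wirtingerDz
    rw [fderiv_ofReal_comp h, fderiv_ofReal_comp h]
  · have h2 : ¬ DifferentiableAt ℝ (fun w => ((ψ w : ℂ))) z := by
      intro hc
      exact h (by simpa [Function.comp_def] using
        (Complex.reCLM.differentiable.differentiableAt (x := (ψ z : ℂ))).comp z hc)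
    unfold wirtingerDzR wirtingerDz
    rw [fderiv_zero_of_not_differentiableAt h, fderiv_zero_of_not_differentiableAt h2]
    simp

lemma wDzb_wirtingerDzR {ψ : ℂ → ℝ} (hψ : ContDiff ℝ 2 ψ) (z : ℂ) :
    wDzb (wirtingerDzR ψ) z = ((lapl ψ z / 4 : ℝ) : ℂ) := by
  have hD : ∀ w : ℂ, Differentiable ℝ fun x => fderiv ℝ ψ x w := fun w =>
    (contDiff_one_fderiv_apply hψ w).differentiable one_ne_zero
  have hdiff : Differentiable ℝ ψ := hψ.differentiable (by norm_num)
  set D : ℂ → ℂ → ℝ := fun v w => fderiv ℝ (fun x => fderiv ℝ ψ x w) z v with hDdef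
  have e1 : wirtingerDzR ψ = fun w => (2⁻¹ : ℂ) * ((fderiv ℝ ψ w 1 : ℝ) : ℂ)
      - (Complex.I/2) * ((fderiv ℝ ψ w Complex.I : ℝ) : ℂ) := by
    funext w; unfold wirtingerDzR; ring
  have hcast : ∀ (v w : ℂ), fderiv ℝ (fun x => ((fderiv ℝ ψ x w : ℝ) : ℂ)) z v
      = ((D v w : ℝ) : ℂ) := fun v w => fderiv_ofReal_comp ((hD w) z) v
  have hdc : ∀ w : ℂ, DifferentiableAt ℝ (fun x => ((fderiv ℝ ψ x w : ℝ) : ℂ)) z := fun w =>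
    Complex.ofRealCLM.differentiable.differentiableAt.comp z ((hD w) z)
  have key : ∀ v : ℂ, fderiv ℝ (wirtingerDzR ψ) z v =
      (2⁻¹ : ℂ) * ((D v 1 : ℝ) : ℂ) - (Complex.I/2) * ((D v Complex.I : ℝ) : ℂ) := by
    intro v
    rw [e1, fderiv_fun_sub ((hdc 1).const_mul _) ((hdc Complex.I).const_mul _),
      fderiv_const_mul (hdc 1), fderiv_const_mul (hdc Complex.I)]
    simp only [ContinuousLinearMap.coe_sub', Pi.sub_apply, ContinuousLinearMap.coe_smul',
      Pi.smul_apply, smul_eq_mul]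
    rw [hcast, hcast]
  have hsymm : D Complex.I 1 = D 1 Complex.I := by
    rw [hDdef]
    simp only
    rw [fderiv_fderiv_apply hψ, fderiv_fderiv_apply hψ, sderiv_symm hψ z 1 Complex.I]
  have hlapl : lapl ψ z = D 1 1 + D Complex.I Complex.I := rfl
  have L : wDzb (wirtingerDzR ψ) z =
      (fderiv ℝ (wirtingerDzR ψ) z 1 + Complex.I * fderiv ℝ (wirtingerDzR ψ) z Complex.I) / 2 :=
    rfl
  rw [L, key, key, hsymm, hlapl]
  push_cast
  linear_combination (-((D Complex.I Complex.I : ℝ) : ℂ)/4) * Complex.I_sq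

lemma integral_fderiv_apply_eq_zero {f : ℂ → ℂ} (hf : ContDiff ℝ 1 f)
    (h2f : HasCompactSupport f) (v : ℂ) : ∫ z : ℂ, fderiv ℝ f z v = 0 := by
  have hder : Continuous fun z => fderiv ℝ f z v :=
    (ContinuousLinearMap.apply ℝ ℂ v).continuous.comp (hf.continuous_fderiv one_ne_zero)
  have hsupp : HasCompactSupport fun z => fderiv ℝ f z v := h2f.fderiv_apply ℝ v
  have h := integral_mul_fderiv_eq_neg_fderiv_mul_of_integrable
    (f := fun _ : ℂ => (1:ℂ)) (g := f) (v := v) (μ := volume)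
    (by simp) (by simpa using hder.integrable_of_hasCompactSupport hsupp)
    (by simpa using hf.continuous.integrable_of_hasCompactSupport h2f)
    (fun x _ => differentiableAt_const _) (fun x _ => hf.differentiable one_ne_zero x)
  simpa using h

lemma integrable_fderiv_apply {f : ℂ → ℂ} (hf : ContDiff ℝ 1 f)
    (h2f : HasCompactSupport f) (v : ℂ) :
    Integrable (fun z : ℂ => fderiv ℝ f z v) volume :=
  ((ContinuousLinearMap.apply ℝ ℂ v).continuous.comp
    (hf.continuous_fderiv one_ne_zero)).integrable_of_hasCompactSupport (h2f.fderiv_apply ℝ v)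

lemma integrable_wirtingerDz {f : ℂ → ℂ} (hf : ContDiff ℝ 1 f)
    (h2f : HasCompactSupport f) : Integrable (wirtingerDz f) volume := by
  have : wirtingerDz f = fun z => (fderiv ℝ f z 1 - Complex.I * fderiv ℝ f z Complex.I) / 2 :=
    rfl
  rw [this]
  exact ((integrable_fderiv_apply hf h2f 1).sub
    ((integrable_fderiv_apply hf h2f Complex.I).const_mul _)).div_const 2

lemma integrable_wDzb {f : ℂ → ℂ} (hf : ContDiff ℝ 1 f)
    (h2f : HasCompactSupport f) : Integrable (wDzb f) volume := by
  have : wDzb f = fun z => (fderiv ℝ f z 1 + Complex.I * fderiv ℝ f z Complex.I) / 2 := rfl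
  rw [this]
  exact ((integrable_fderiv_apply hf h2f 1).add
    ((integrable_fderiv_apply hf h2f Complex.I).const_mul _)).div_const 2

lemma integral_wirtingerDz_eq_zero {f : ℂ → ℂ} (hf : ContDiff ℝ 1 f)
    (h2f : HasCompactSupport f) : ∫ z : ℂ, wirtingerDz f z = 0 := by
  have : ∫ z : ℂ, wirtingerDz f z =
      (∫ z : ℂ, (fderiv ℝ f z 1 - Complex.I * fderiv ℝ f z Complex.I)) / 2 := by
    rw [← integral_div]; rfl
  rw [this, integral_sub (integrable_fderiv_apply hf h2f 1)
    ((integrable_fderiv_apply hf h2f Complex.I).const_mul _), integral_const_mul,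
    integral_fderiv_apply_eq_zero hf h2f 1, integral_fderiv_apply_eq_zero hf h2f Complex.I]
  simp

lemma integral_wDzb_eq_zero {f : ℂ → ℂ} (hf : ContDiff ℝ 1 f)
    (h2f : HasCompactSupport f) : ∫ z : ℂ, wDzb f z = 0 := by
  have : ∫ z : ℂ, wDzb f z =
      (∫ z : ℂ, (fderiv ℝ f z 1 + Complex.I * fderiv ℝ f z Complex.I)) / 2 := by
    rw [← integral_div]; rfl
  rw [this, integral_add (integrable_fderiv_apply hf h2f 1)
    ((integrable_fderiv_apply hf h2f Complex.I).const_mul _), integral_const_mul,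
    integral_fderiv_apply_eq_zero hf h2f 1, integral_fderiv_apply_eq_zero hf h2f Complex.I]
  simp

lemma norm_sq_ofReal (w : ℂ) : ((‖w‖ : ℝ) : ℂ)^2 = w * (starRingEnd ℂ) w := by
  rw [Complex.mul_conj]
  norm_cast
  rw [Complex.normSq_eq_norm_sq]

set_option maxHeartbeats 1000000 in
/-- Quadratic form lower bound for the formal adjoint `-∂/∂z + λ ∂ψ/∂z` of the twisted
Cauchy–Riemann operator, imposed by positivity of the complex Hessian of the weight. -/
theorem adjoint_lower_bound (ψ : ℂ → ℝ) (hψ : ContDiff ℝ 2 ψ)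
    (a : ℝ) (ha : 0 < a) (hHess : ∀ z : ℂ, a ≤ lapl ψ z / 4) :
    ∀ lam : ℝ, 0 < lam → ∀ u : ℂ → ℂ, ContDiff ℝ 2 u → HasCompactSupport u →
      2 * a * lam * ∫ w : ℂ, ‖u w‖ ^ 2 ≤
        ∫ w : ℂ, ‖-wirtingerDz u w + (lam : ℂ) * wirtingerDzR ψ w * u w‖ ^ 2 := by
  intro lam hlam u hu hus
  set c := starRingEnd ℂ with hc
  set p : ℂ → ℂ := wirtingerDzR ψ with hpdef
  have hp_eq : p = wirtingerDz (fun w => ((ψ w : ℂ))) := funext fun z => wirtingerDzR_eq z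
  have hpC1 : ContDiff ℝ 1 p := hp_eq ▸ contDiff_one_wirtingerDz (contDiff_ofReal_comp hψ)
  set P : ℂ → ℂ := wirtingerDz u with hPdef
  set Q : ℂ → ℂ := wDzb u with hQdef
  have hPC1 : ContDiff ℝ 1 P := contDiff_one_wirtingerDz hu
  have hQC1 : ContDiff ℝ 1 Q := contDiff_one_wDzb hu
  have hcu : ContDiff ℝ 2 fun w => c (u w) := contDiff_conj_comp hu
  have hu1 : ContDiff ℝ 1 u := hu.of_le one_le_two
  have hcu1 : ContDiff ℝ 1 fun w => c (u w) := hcu.of_le one_le_two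
  have hud : Differentiable ℝ u := hu1.differentiable one_ne_zero
  have hcud : Differentiable ℝ fun w => c (u w) := hcu1.differentiable one_ne_zero
  have hpd : Differentiable ℝ p := hpC1.differentiable one_ne_zero
  have hPd : Differentiable ℝ P := hPC1.differentiable one_ne_zero
  have hQd : Differentiable ℝ Q := hQC1.differentiable one_ne_zero
  set F : ℂ → ℂ := fun z => c (u z) * P z with hFdef
  set G : ℂ → ℂ := fun z => c (u z) * Q z with hGdef
  set H : ℂ → ℂ := fun z => p z * (u z * c (u z)) with hHdef
  set Hc : ℂ → ℂ := fun z => c (H z) with hHcdef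
  have hF1 : ContDiff ℝ 1 F := hcu1.mul hPC1
  have hG1 : ContDiff ℝ 1 G := hcu1.mul hQC1
  have hH1 : ContDiff ℝ 1 H := hpC1.mul (hu1.mul hcu1)
  have hHc1 : ContDiff ℝ 1 Hc := contDiff_conj_comp hH1
  -- compact supports
  have hcus : HasCompactSupport fun z => c (u z) := hus.comp_left (map_zero c)
  have hFs : HasCompactSupport F := hcus.mul_right
  have hGs : HasCompactSupport G := hcus.mul_right
  have hHs : HasCompactSupport H := (hus.mul_right).mul_left
  have hHcs : HasCompactSupport Hc := hHs.comp_left (map_zero c)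
  -- derivative identities
  have eF : ∀ z, wDzb F z = c (P z) * P z + c (u z) * wDzb P z := by
    intro z
    rw [hFdef]
    rw [wDzb_mul (hcud z) (hPd z), wDzb_conj (hud z)]
    ring
  have eG : ∀ z, wirtingerDz G z = c (Q z) * Q z + c (u z) * wirtingerDz Q z := by
    intro z
    rw [hGdef, wirtingerDz_mul (hcud z) (hQd z), wirtingerDz_conj (hud z)]
    ring
  have emix : ∀ z, wDzb P z = wirtingerDz Q z := wDzb_wirtingerDz_eq hu
  have eH : ∀ z, wDzb H z = ((lapl ψ z / 4 : ℝ) : ℂ) * (u z * c (u z))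
      + p z * (Q z * c (u z) + u z * c (P z)) := by
    intro z
    rw [hHdef, wDzb_mul (hpd z) ((hud z).fun_mul (hcud z)), wDzb_mul (hud z) (hcud z),
      wDzb_conj (hud z), hpdef, wDzb_wirtingerDzR hψ z]
    ring
  have eHc : ∀ z, wirtingerDz Hc z = c (wDzb H z) := by
    intro z
    rw [hHcdef]
    exact wirtingerDz_conj ((hH1.differentiable one_ne_zero) z)
  -- the pointwise identity
  have hkey : ∀ z : ℂ, ((‖-P z + (lam:ℂ) * p z * u z‖^2 : ℝ) : ℂ)
      = ((‖Q z + (lam:ℂ) * c (p z) * u z‖^2 + 2*lam*(lapl ψ z/4)*‖u z‖^2 : ℝ) : ℂ)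
        + (wDzb F z - wirtingerDz G z - (lam:ℂ) * (wDzb H z + wirtingerDz Hc z)) := by
    intro z
    rw [eF z, eG z, emix z, eHc z, eH z]
    push_cast
    rw [norm_sq_ofReal, norm_sq_ofReal, norm_sq_ofReal]
    simp only [hc, map_add, map_mul, map_neg, Complex.conj_conj, Complex.conj_ofReal,
      map_div₀, map_one, map_ofNat]
    push_cast
    ring
  -- compact supports and integrability of the quadratic quantities
  have hPs : HasCompactSupport P :=
    (hus.fderiv ℝ).comp_left
      (g := fun L : ℂ →L[ℝ] ℂ => (L 1 - Complex.I * L Complex.I) / 2) (by simp)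
  have hQs : HasCompactSupport Q :=
    (hus.fderiv ℝ).comp_left
      (g := fun L : ℂ →L[ℝ] ℂ => (L 1 + Complex.I * L Complex.I) / 2) (by simp)
  have hTs : HasCompactSupport fun z => -P z + (lam:ℂ) * p z * u z :=
    hPs.neg.add hus.mul_left
  have hSs : HasCompactSupport fun z => Q z + (lam:ℂ) * c (p z) * u z :=
    hQs.add hus.mul_left
  have hTcont : Continuous fun z => -P z + (lam:ℂ) * p z * u z :=
    hPC1.continuous.neg.add ((continuous_const.mul hpC1.continuous).mul hu1.continuous)
  have hScont : Continuous fun z => Q z + (lam:ℂ) * c (p z) * u z :=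
    hQC1.continuous.add
      ((continuous_const.mul (continuous_star.comp hpC1.continuous)).mul hu1.continuous)
  have intfT : Integrable (fun z : ℂ => ‖-P z + (lam:ℂ) * p z * u z‖^2) volume := by
    have hT1 : Continuous fun z : ℂ => ‖-P z + (lam:ℂ) * p z * u z‖^2 := hTcont.norm.pow 2
    have hT2 : HasCompactSupport fun z : ℂ => ‖-P z + (lam:ℂ) * p z * u z‖^2 :=
      hTs.comp_left (g := fun w : ℂ => ‖w‖^2) (by simp)
    exact hT1.integrable_of_hasCompactSupport hT2
  have intfS : Integrable (fun z : ℂ => ‖Q z + (lam:ℂ) * c (p z) * u z‖^2) volume := by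
    have hS1 : Continuous fun z : ℂ => ‖Q z + (lam:ℂ) * c (p z) * u z‖^2 := hScont.norm.pow 2
    have hS2 : HasCompactSupport fun z : ℂ => ‖Q z + (lam:ℂ) * c (p z) * u z‖^2 :=
      hSs.comp_left (g := fun w : ℂ => ‖w‖^2) (by simp)
    exact hS1.integrable_of_hasCompactSupport hS2
  have hUsupp : HasCompactSupport fun z : ℂ => ‖u z‖^2 :=
    hus.comp_left (g := fun w : ℂ => ‖w‖^2) (by simp)
  have intfU : Integrable (fun z : ℂ => ‖u z‖^2) volume :=
    (hu1.continuous.norm.pow 2).integrable_of_hasCompactSupport hUsupp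
  have hlaplcont : Continuous (lapl ψ) := by
    have c1 : Continuous fun z : ℂ => fderiv ℝ (fun w => fderiv ℝ ψ w 1) z 1 :=
      (ContinuousLinearMap.apply ℝ ℝ (1:ℂ)).continuous.comp
        ((contDiff_one_fderiv_apply hψ 1).continuous_fderiv one_ne_zero)
    have cI : Continuous fun z : ℂ =>
        fderiv ℝ (fun w => fderiv ℝ ψ w Complex.I) z Complex.I :=
      (ContinuousLinearMap.apply ℝ ℝ (Complex.I)).continuous.comp
        ((contDiff_one_fderiv_apply hψ Complex.I).continuous_fderiv one_ne_zero)
    exact c1.add cI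
  have intfL : Integrable (fun z : ℂ => 2*lam*(lapl ψ z/4)*‖u z‖^2) volume :=
    ((continuous_const.mul (hlaplcont.div_const 4)).mul
      (hu1.continuous.norm.pow 2)).integrable_of_hasCompactSupport
        (hUsupp.mul_left (f := fun z : ℂ => 2*lam*(lapl ψ z/4)))
  -- the divergence terms integrate to zero
  have hIW : (∫ z : ℂ, (wDzb F z - wirtingerDz G z
      - (lam:ℂ) * (wDzb H z + wirtingerDz Hc z))) = 0 := by
    have h12 : Integrable (fun z => wDzb F z - wirtingerDz G z) volume :=
      (integrable_wDzb hF1 hFs).sub (integrable_wirtingerDz hG1 hGs)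
    have h34 : Integrable (fun z => (lam:ℂ) * (wDzb H z + wirtingerDz Hc z)) volume :=
      ((integrable_wDzb hH1 hHs).add (integrable_wirtingerDz hHc1 hHcs)).const_mul _
    rw [integral_sub h12 h34,
      integral_sub (integrable_wDzb hF1 hFs) (integrable_wirtingerDz hG1 hGs),
      integral_const_mul,
      integral_add (integrable_wDzb hH1 hHs) (integrable_wirtingerDz hHc1 hHcs),
      integral_wDzb_eq_zero hF1 hFs, integral_wirtingerDz_eq_zero hG1 hGs,
      integral_wDzb_eq_zero hH1 hHs, integral_wirtingerDz_eq_zero hHc1 hHcs]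
    simp
  have hfun : (fun z : ℂ => ((‖-P z + (lam:ℂ) * p z * u z‖^2 : ℝ) : ℂ)
      - ((‖Q z + (lam:ℂ) * c (p z) * u z‖^2 + 2*lam*(lapl ψ z/4)*‖u z‖^2 : ℝ) : ℂ))
      = fun z => wDzb F z - wirtingerDz G z - (lam:ℂ) * (wDzb H z + wirtingerDz Hc z) := by
    funext z
    rw [hkey z]
    ring
  have hzero : (∫ z : ℂ, (((‖-P z + (lam:ℂ) * p z * u z‖^2 : ℝ) : ℂ)
      - ((‖Q z + (lam:ℂ) * c (p z) * u z‖^2 + 2*lam*(lapl ψ z/4)*‖u z‖^2 : ℝ) : ℂ))) = 0 := by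
    rw [hfun]
    exact hIW
  have intSL : Integrable (fun z : ℂ => ‖Q z + (lam:ℂ) * c (p z) * u z‖^2
      + 2*lam*(lapl ψ z/4)*‖u z‖^2) volume := intfS.add intfL
  have intT' : Integrable (fun z : ℂ =>
      ((‖-P z + (lam:ℂ) * p z * u z‖^2 : ℝ) : ℂ)) volume := intfT.ofReal
  have intSL' : Integrable (fun z : ℂ => ((‖Q z + (lam:ℂ) * c (p z) * u z‖^2
      + 2*lam*(lapl ψ z/4)*‖u z‖^2 : ℝ) : ℂ)) volume := intSL.ofReal
  rw [integral_sub intT' intSL', sub_eq_zero] at hzero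
  have hc1 : (∫ z : ℂ, ((‖-P z + (lam:ℂ) * p z * u z‖^2 : ℝ) : ℂ))
      = (((∫ z : ℂ, ‖-P z + (lam:ℂ) * p z * u z‖^2) : ℝ) : ℂ) := integral_ofReal
  have hc2 : (∫ z : ℂ, ((‖Q z + (lam:ℂ) * c (p z) * u z‖^2
        + 2*lam*(lapl ψ z/4)*‖u z‖^2 : ℝ) : ℂ))
      = (((∫ z : ℂ, (‖Q z + (lam:ℂ) * c (p z) * u z‖^2
        + 2*lam*(lapl ψ z/4)*‖u z‖^2)) : ℝ) : ℂ) := integral_ofReal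
  rw [hc1, hc2] at hzero
  have hreal : (∫ z : ℂ, ‖-P z + (lam:ℂ) * p z * u z‖^2)
      = (∫ z : ℂ, (‖Q z + (lam:ℂ) * c (p z) * u z‖^2 + 2*lam*(lapl ψ z/4)*‖u z‖^2)) := by
    exact_mod_cast hzero
  rw [integral_add intfS intfL] at hreal
  have h1 : 0 ≤ ∫ z : ℂ, ‖Q z + (lam:ℂ) * c (p z) * u z‖^2 :=
    integral_nonneg fun z => by positivity
  have h2 : (∫ z : ℂ, 2*a*lam*‖u z‖^2) ≤ ∫ z : ℂ, 2*lam*(lapl ψ z/4)*‖u z‖^2 := by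
    refine integral_mono (intfU.const_mul _) intfL fun z => ?_
    have hh := mul_le_mul_of_nonneg_right (hHess z) (sq_nonneg ‖u z‖)
    nlinarith [sq_nonneg ‖u z‖]
  rw [integral_const_mul] at h2
  linarith
end
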